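/- Every Γ-object in ECC has a principal type: if Γ ⊢ α : τ is derivable, then there exists τ₀ with Γ ⊢ α : τ₀ such that for every σ with Γ ⊢ α : σ one has τ₀ ⪯ σ. -/

import Mathlib

namespace ECC

/-- Terms of Luo's Extended Calculus of Constructions, in de Bruijn representation. -/
inductive Term : Type
  | var   : ℕ → Term
  | prop  : Term
  | type  : ℕ → Term
  | pi    : Term → Term → Term
  | sigma : Term → Term → Term
  | lam   : Term → Term → Term
  | app   : Term → Term → Term
  | pair  : Term → Term → Term → Term   -- ⟨M, N⟩_B with type annotation B
  | proj1 : Term → Term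
  | proj2 : Term → Term
deriving DecidableEq

/-- Lift (shift by `d`) all de Bruijn indices ≥ `k`. -/
def lift (d : ℕ) : ℕ → Term → Term
  | k, .var n       => if n < k then .var n else .var (n + d)
  | _, .prop        => .prop
  | _, .type j      => .type j
  | k, .pi A B      => .pi (lift d k A) (lift d (k+1) B)
  | k, .sigma A B   => .sigma (lift d k A) (lift d (k+1) B)
  | k, .lam A M     => .lam (lift d k A) (lift d (k+1) M)
  | k, .app M N     => .app (lift d k M) (lift d k N)
  | k, .pair M N B  => .pair (lift d k M) (lift d k N) (lift d k B)
  | k, .proj1 M     => .proj1 (lift d k M)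
  | k, .proj2 M     => .proj2 (lift d k M)

/-- Capture-avoiding substitution `[N/x]A` of the term `N` for the variable `x` in `A`. -/
def subst (N : Term) : ℕ → Term → Term
  | k, .var n       => if n < k then .var n else if n = k then lift k 0 N else .var (n - 1)
  | _, .prop        => .prop
  | _, .type j      => .type j
  | k, .pi A B      => .pi (subst N k A) (subst N (k+1) B)
  | k, .sigma A B   => .sigma (subst N k A) (subst N (k+1) B)
  | k, .lam A M     => .lam (subst N k A) (subst N (k+1) M)
  | k, .app M M'    => .app (subst N k M) (subst N k M')
  | k, .pair M M' B => .pair (subst N k M) (subst N k M') (subst N k B)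
  | k, .proj1 M     => .proj1 (subst N k M)
  | k, .proj2 M     => .proj2 (subst N k M)

/-- `[N/x₀]B` : substitution for the outermost bound variable. -/
def subst0 (B N : Term) : Term := subst N 0 B

/-- One-step reduction (β together with the projection reductions, closed under all
term-formation congruences). -/
inductive Red : Term → Term → Prop
  | beta    : Red (.app (.lam A M) N) (subst0 M N)
  | pr1     : Red (.proj1 (.pair M N B)) M
  | pr2     : Red (.proj2 (.pair M N B)) N
  | piL     : Red A A' → Red (.pi A B) (.pi A' B)
  | piR     : Red B B' → Red (.pi A B) (.pi A B')
  | sigmaL  : Red A A' → Red (.sigma A B) (.sigma A' B)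
  | sigmaR  : Red B B' → Red (.sigma A B) (.sigma A B')
  | lamL    : Red A A' → Red (.lam A M) (.lam A' M)
  | lamR    : Red M M' → Red (.lam A M) (.lam A M')
  | appL    : Red M M' → Red (.app M N) (.app M' N)
  | appR    : Red N N' → Red (.app M N) (.app M N')
  | pairL   : Red M M' → Red (.pair M N B) (.pair M' N B)
  | pairR   : Red N N' → Red (.pair M N B) (.pair M N' B)
  | pairB   : Red B B' → Red (.pair M N B) (.pair M N B')
  | proj1C  : Red M M' → Red (.proj1 M) (.proj1 M')
  | proj2C  : Red M M' → Red (.proj2 M) (.proj2 M')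

/-- Conversion `≃` : the equivalence relation generated by reduction. -/
def Conv : Term → Term → Prop := Relation.EqvGen Red

/-- `A` has a normal form. -/
def HasNF (A : Term) : Prop :=
  ∃ B, Relation.ReflTransGen Red A B ∧ ∀ C, ¬ Red B C

/-- `𝒯` : the set of normalisable terms. -/
def Tset : Set Term := {A | HasNF A}

/-- Universes are `Prop` and the `Type_j`. -/
def IsUniv (T : Term) : Prop := T = .prop ∨ ∃ j, T = .type j

/-- The cumulativity relation `⪯` : the smallest preorder containing conversion,
the universe order, congruence for Π in the codomain, and congruence for Σ in both
components. -/
inductive Cum : Term → Term → Prop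
  | conv     : Conv A B → Cum A B
  | propType : Cum .prop (.type 0)
  | typeType : j ≤ k → Cum (.type j) (.type k)
  | pi       : Conv A A' → Cum B B' → Cum (.pi A B) (.pi A' B')
  | sigma    : Cum A A' → Cum B B' → Cum (.sigma A B) (.sigma A' B')
  | trans    : Cum A B → Cum B C → Cum A C

/-- The strict cumulativity relation `≺` : `A ⪯ B` and `A ≄ B`. -/
def SCum (A B : Term) : Prop := Cum A B ∧ ¬ Conv A B

/-- The stratified cumulativity relations `⪯ᵢ`. -/
inductive CumL : ℕ → Term → Term → Prop
  | conv     : Conv A B → CumL i A B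
  | propType : CumL i .prop (.type j)
  | typeType : j < k → CumL i (.type j) (.type k)
  | succ     : CumL i A B → CumL (i+1) A B
  | pi       : Conv M (.pi A B) → Conv N (.pi A' B') → Conv A A' → CumL i B B' →
               CumL (i+1) M N
  | sigma    : Conv M (.sigma A B) → Conv N (.sigma A' B') → CumL i A A' → CumL i B B' →
               CumL (i+1) M N

/-- Strict stratified cumulativity `≺ᵢ`. -/
def SCumL (i : ℕ) (A B : Term) : Prop := CumL i A B ∧ ¬ Conv A B

/-- Is the outermost symbol of a term Π or Σ? -/
def BinderHeaded : Term → Prop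
  | .pi _ _    => True
  | .sigma _ _ => True
  | _          => False

/-- The base stratum: normalisable terms not convertible to a binder-headed
normalisable term. -/
def Base : Set Term :=
  {T | HasNF T ∧ ¬ ∃ B, HasNF B ∧ BinderHeaded B ∧ Conv T B}

/-- The stratification `(Π_n, Σ_n)` of `𝒯`. -/
def Strata : ℕ → Set Term × Set Term
  | 0 => (Base, Base)
  | n+1 =>
    ({T | ∃ k l, ∃ _ : k + l = n, ∃ A B, HasNF (Term.pi A B) ∧ Conv T (Term.pi A B) ∧
        A ∈ (Strata k).1 ∪ (Strata k).2 ∧ B ∈ (Strata l).1 ∪ (Strata l).2},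
     {T | ∃ k l, ∃ _ : k + l = n, ∃ A B, HasNF (Term.sigma A B) ∧ Conv T (Term.sigma A B) ∧
        A ∈ (Strata k).1 ∪ (Strata k).2 ∧ B ∈ (Strata l).1 ∪ (Strata l).2})
termination_by n => n
decreasing_by all_goals omega

/-- The stratum `Π_n`. -/
def PiStr (n : ℕ) : Set Term := (Strata n).1

/-- The stratum `Σ_n`. -/
def SigStr (n : ℕ) : Set Term := (Strata n).2

/-- The specification of the rank function `φ : 𝒯 → ω`. -/
def PhiSpec (φ : Term → ℕ) : Prop :=
  (∀ M N, HasNF M → HasNF N → Conv M N → φ M = φ N) ∧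
  (∀ T, HasNF T → Conv T .prop → φ T = 2) ∧
  (∀ T j, HasNF T → Conv T (.type j) → φ T = 3 + j) ∧
  (∀ T, T ∈ PiStr 0 → ¬ Conv T .prop → (∀ j, ¬ Conv T (.type j)) → φ T = 1) ∧
  (∀ T A B, HasNF T → (Conv T (.pi A B) ∨ Conv T (.sigma A B)) → φ T = φ A * φ B) ∧
  (∀ T, HasNF T → 0 < φ T)

mutual
/-- Valid contexts of ECC (de Bruijn: the head of the list is the most recent entry). -/
inductive Valid : List Term → Prop
  | nil  : Valid []
  | cons : Typing Γ A (.type j) → Valid (A :: Γ)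

/-- The typing judgement `Γ ⊢ M : A` of ECC. -/
inductive Typing : List Term → Term → Term → Prop
  | prop  : Valid Γ → Typing Γ .prop (.type 0)
  | type  : Valid Γ → Typing Γ (.type j) (.type (j+1))
  | var   : Valid Γ → Γ[n]? = some A → Typing Γ (.var n) (lift (n+1) 0 A)
  | pi1   : Typing Γ A (.type j) → Typing (A :: Γ) B .prop →
            Typing Γ (.pi A B) .prop
  | pi2   : Typing Γ A (.type j) → Typing (A :: Γ) B (.type j) →
            Typing Γ (.pi A B) (.type j)
  | sig   : Typing Γ A (.type j) → Typing (A :: Γ) B (.type j) →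
            Typing Γ (.sigma A B) (.type j)
  | lam   : Typing (A :: Γ) M B → Typing Γ (.lam A M) (.pi A B)
  | app   : Typing Γ M (.pi A B) → Typing Γ N A → Typing Γ (.app M N) (subst0 B N)
  | pair  : Typing Γ M A → Typing Γ N (subst0 B M) → Typing (A :: Γ) B (.type j) →
            Typing Γ (.pair M N (.sigma A B)) (.sigma A B)
  | proj1 : Typing Γ M (.sigma A B) → Typing Γ (.proj1 M) A
  | proj2 : Typing Γ M (.sigma A B) → Typing Γ (.proj2 M) (subst0 B (.proj1 M))
  | cum   : Typing Γ M A → Typing Γ B (.type j) → Cum A B → Typing Γ M B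
end

/-- `Type_j` for `j ∈ ℤ`, with the convention `Type_{-1} = Prop`. -/
def TType (j : ℤ) : Term := if j < 0 then .prop else .type j.toNat

/-- The typing judgement of the restricted system `ECC⁻`: the rules
`(Π2)(Σ)(app)(pair)(⪯)` of ECC are replaced by `(Π2')(Σ')(app')(pair')` and `(≃)_ρ`. -/
inductive TypingM : List Term → Term → Term → Prop
  | prop  : Valid Γ → TypingM Γ .prop (.type 0)
  | type  : Valid Γ → TypingM Γ (.type j) (.type (j+1))
  | var   : Valid Γ → Γ[n]? = some A → TypingM Γ (.var n) (lift (n+1) 0 A)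
  | pi1   : TypingM Γ A (.type j) → TypingM (A :: Γ) B .prop →
            TypingM Γ (.pi A B) .prop
  | pi2'  : TypingM Γ A (TType j) → TypingM (A :: Γ) B (TType k) → 0 ≤ k →
            TypingM Γ (.pi A B) (TType (max (max j k) 0))
  | sig'  : TypingM Γ A (TType j) → TypingM (A :: Γ) B (TType k) →
            TypingM Γ (.sigma A B) (TType (max (max j k) 0))
  | lam   : TypingM (A :: Γ) M B → TypingM Γ (.lam A M) (.pi A B)
  | app'  : TypingM Γ M (.pi A B) → TypingM Γ N A' → Cum A' A →
            TypingM Γ (.app M N) (subst0 B N)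
  | pair' : TypingM Γ M A → TypingM Γ N C → TypingM (A' :: Γ) B' (.type j) →
            Cum A A' → Cum C (subst0 B' M) →
            TypingM Γ (.pair M N (.sigma A' B')) (.sigma A' B')
  | proj1 : TypingM Γ M (.sigma A B) → TypingM Γ (.proj1 M) A
  | proj2 : TypingM Γ M (.sigma A B) → TypingM Γ (.proj2 M) (subst0 B (.proj1 M))
  | conv  : TypingM Γ M A → Conv A A' → Typing Γ A' (.type j) → TypingM Γ M A'

end ECC

namespace ECC

theorem lift_zero : ∀ (k : ℕ) (t : Term), lift 0 k t = t := by
  intro k t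
  induction t generalizing k <;> simp_all [lift]

theorem lift_lift_merge {d e k i : ℕ} (t : Term) (h1 : k ≤ i) (h2 : i ≤ k + e) :
    lift d i (lift e k t) = lift (d+e) k t := by
  induction t generalizing k i with
  | var n =>
    simp only [lift]; split_ifs with h
    · simp only [lift]; split_ifs with h' <;> [rfl; omega]
    · simp only [lift]; split_ifs with h' <;> [omega; (congr 1; omega)]
  | prop => rfl
  | type j => rfl
  | pi A B ihA ihB => simp only [lift]; rw [ihA h1 h2, ihB (by omega) (by omega)]
  | sigma A B ihA ihB => simp only [lift]; rw [ihA h1 h2, ihB (by omega) (by omega)]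
  | lam A B ihA ihB => simp only [lift]; rw [ihA h1 h2, ihB (by omega) (by omega)]
  | app A B ihA ihB => simp only [lift]; rw [ihA h1 h2, ihB h1 h2]
  | pair A B C ihA ihB ihC => simp only [lift]; rw [ihA h1 h2, ihB h1 h2, ihC h1 h2]
  | proj1 A ihA => simp only [lift]; rw [ihA h1 h2]
  | proj2 A ihA => simp only [lift]; rw [ihA h1 h2]

theorem lift_lift_perm {d e k i : ℕ} (t : Term) (h1 : i ≤ k) :
    lift d i (lift e k t) = lift e (k+d) (lift d i t) := by
  induction t generalizing k i with
  | var n =>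
    simp only [lift]; split_ifs <;> simp only [lift] <;> split_ifs <;>
      first | rfl | omega | (congr 1; omega)
  | prop => rfl
  | type j => rfl
  | pi A B ihA ihB =>
    simp only [lift]; rw [ihA h1, ihB (by omega), Nat.add_right_comm k 1 d]
  | sigma A B ihA ihB =>
    simp only [lift]; rw [ihA h1, ihB (by omega), Nat.add_right_comm k 1 d]
  | lam A B ihA ihB =>
    simp only [lift]; rw [ihA h1, ihB (by omega), Nat.add_right_comm k 1 d]
  | app A B ihA ihB => simp only [lift]; rw [ihA h1, ihB h1]
  | pair A B C ihA ihB ihC => simp only [lift]; rw [ihA h1, ihB h1, ihC h1]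
  | proj1 A ihA => simp only [lift]; rw [ihA h1]
  | proj2 A ihA => simp only [lift]; rw [ihA h1]

theorem lift_subst {d k i : ℕ} (N t : Term) (h1 : i ≤ k) :
    lift d k (subst N i t) = subst (lift d (k - i) N) i (lift d (k+1) t) := by
  induction t generalizing k i with
  | var n =>
    simp only [subst, lift]; split_ifs <;> simp only [subst, lift] <;> split_ifs <;>
      first
        | rfl | omega | (congr 1; omega)
        | (rw [lift_lift_perm N (Nat.zero_le _)]; congr 1; omega)
  | prop => rfl
  | type j => rfl
  | pi A B ihA ihB =>
    simp only [lift, subst]; rw [ihA h1, ihB (by omega), Nat.succ_sub_succ]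
  | sigma A B ihA ihB =>
    simp only [lift, subst]; rw [ihA h1, ihB (by omega), Nat.succ_sub_succ]
  | lam A B ihA ihB =>
    simp only [lift, subst]; rw [ihA h1, ihB (by omega), Nat.succ_sub_succ]
  | app A B ihA ihB => simp only [lift, subst]; rw [ihA h1, ihB h1]
  | pair A B C ihA ihB ihC => simp only [lift, subst]; rw [ihA h1, ihB h1, ihC h1]
  | proj1 A ihA => simp only [lift, subst]; rw [ihA h1]
  | proj2 A ihA => simp only [lift, subst]; rw [ihA h1]

theorem subst_lift_high {d k i : ℕ} (N t : Term) (h1 : k ≤ i) :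
    lift d k (subst N i t) = subst N (i+d) (lift d k t) := by
  induction t generalizing k i with
  | var n =>
    simp only [subst, lift]; split_ifs <;> simp only [subst, lift] <;> split_ifs <;>
      first
        | rfl | omega | (congr 1; omega)
        | (rw [lift_lift_merge N (Nat.zero_le _) (by omega)]; congr 1; omega)
  | prop => rfl
  | type j => rfl
  | pi A B ihA ihB =>
    simp only [lift, subst]; rw [ihA h1, ihB (by omega), Nat.add_right_comm i 1 d]
  | sigma A B ihA ihB =>
    simp only [lift, subst]; rw [ihA h1, ihB (by omega), Nat.add_right_comm i 1 d]
  | lam A B ihA ihB =>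
    simp only [lift, subst]; rw [ihA h1, ihB (by omega), Nat.add_right_comm i 1 d]
  | app A B ihA ihB => simp only [lift, subst]; rw [ihA h1, ihB h1]
  | pair A B C ihA ihB ihC => simp only [lift, subst]; rw [ihA h1, ihB h1, ihC h1]
  | proj1 A ihA => simp only [lift, subst]; rw [ihA h1]
  | proj2 A ihA => simp only [lift, subst]; rw [ihA h1]

theorem subst_lift_cancel {d k i : ℕ} (N t : Term) (h1 : k ≤ i) (h2 : i < k + d) :
    subst N i (lift d k t) = lift (d-1) k t := by
  induction t generalizing k i with
  | var n =>
    simp only [subst, lift]; split_ifs <;> simp only [subst, lift] <;> split_ifs <;>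
      first | rfl | omega | (congr 1; omega)
  | prop => rfl
  | type j => rfl
  | pi A B ihA ihB =>
    simp only [lift, subst]; rw [ihA h1 h2, ihB (by omega) (by omega)]
  | sigma A B ihA ihB =>
    simp only [lift, subst]; rw [ihA h1 h2, ihB (by omega) (by omega)]
  | lam A B ihA ihB =>
    simp only [lift, subst]; rw [ihA h1 h2, ihB (by omega) (by omega)]
  | app A B ihA ihB => simp only [lift, subst]; rw [ihA h1 h2, ihB h1 h2]
  | pair A B C ihA ihB ihC => simp only [lift, subst]; rw [ihA h1 h2, ihB h1 h2, ihC h1 h2]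
  | proj1 A ihA => simp only [lift, subst]; rw [ihA h1 h2]
  | proj2 A ihA => simp only [lift, subst]; rw [ihA h1 h2]

theorem subst_lift_low {d k i : ℕ} (N t : Term) (h1 : i ≤ k - d) (h2 : d ≤ k) :
    subst N k (lift d i t) = lift d i (subst N (k-d) t) := by
  induction t generalizing k i with
  | var n =>
    simp only [subst, lift]; split_ifs <;> simp only [subst, lift] <;> split_ifs <;>
      first
        | rfl | omega | (congr 1; omega)
        | (rw [lift_lift_merge N (Nat.zero_le _) (by omega)]; congr 1; omega)
  | prop => rfl
  | type j => rfl
  | pi A B ihA ihB =>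
    simp only [lift, subst]
    rw [ihA h1 h2, ihB (by omega) (by omega)]
    have : k + 1 - d = k - d + 1 := by omega
    rw [this]
  | sigma A B ihA ihB =>
    simp only [lift, subst]
    rw [ihA h1 h2, ihB (by omega) (by omega)]
    have : k + 1 - d = k - d + 1 := by omega
    rw [this]
  | lam A B ihA ihB =>
    simp only [lift, subst]
    rw [ihA h1 h2, ihB (by omega) (by omega)]
    have : k + 1 - d = k - d + 1 := by omega
    rw [this]
  | app A B ihA ihB => simp only [lift, subst]; rw [ihA h1 h2, ihB h1 h2]
  | pair A B C ihA ihB ihC => simp only [lift, subst]; rw [ihA h1 h2, ihB h1 h2, ihC h1 h2]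
  | proj1 A ihA => simp only [lift, subst]; rw [ihA h1 h2]
  | proj2 A ihA => simp only [lift, subst]; rw [ihA h1 h2]

theorem subst_subst {k j : ℕ} (N P t : Term) (h1 : j ≤ k) :
    subst N k (subst P j t) = subst (subst N (k-j) P) j (subst N (k+1) t) := by
  induction t generalizing k j with
  | var n =>
    by_cases h2 : n < j
    · have h3 : n < k := by omega
      have h4 : n < k + 1 := by omega
      simp [subst, h2, h3, h4]
    · by_cases h5 : n = j
      · subst h5
        have h6 : n < k + 1 := by omega
        have h7 : ¬ n < k + 1 → False := by omega
        simp [subst, h2, h6]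
        exact subst_lift_low N P (by omega) (by omega)
      · by_cases h6 : n < k + 1
        · have e3 : n - 1 < k := by omega
          simp [subst, h2, h5, h6, e3]
        · by_cases h7 : n = k + 1
          · subst h7
            have e1 : ¬ k < j := by omega
            have e2 : ¬ (k : ℕ) < k := by omega
            simp [subst, h2, h5, h6, e1, e2]
            rw [subst_lift_cancel (subst N (k-j) P) N (Nat.zero_le _) (by omega)]
            congr 1
          · have e1 : ¬ n - 1 < k := by omega
            have e2 : n - 1 ≠ k := by omega
            have e3 : ¬ n - 1 < j := by omega
            have e4 : n - 1 ≠ j := by omega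
            simp [subst, h2, h5, h6, h7, e1, e2, e3, e4]
  | prop => rfl
  | type j => rfl
  | pi A B ihA ihB =>
    simp only [subst]; rw [ihA h1, ihB (by omega), Nat.succ_sub_succ]
  | sigma A B ihA ihB =>
    simp only [subst]; rw [ihA h1, ihB (by omega), Nat.succ_sub_succ]
  | lam A B ihA ihB =>
    simp only [subst]; rw [ihA h1, ihB (by omega), Nat.succ_sub_succ]
  | app A B ihA ihB => simp only [subst]; rw [ihA h1, ihB h1]
  | pair A B C ihA ihB ihC => simp only [subst]; rw [ihA h1, ihB h1, ihC h1]
  | proj1 A ihA => simp only [subst]; rw [ihA h1]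
  | proj2 A ihA => simp only [subst]; rw [ihA h1]

end ECC
namespace ECC

open Relation

/-- Multi-step reduction. -/
abbrev Rs : Term → Term → Prop := ReflTransGen Red

theorem Rs.pi_congr {A A' B B' : Term} (hA : Rs A A') (hB : Rs B B') :
    Rs (.pi A B) (.pi A' B') :=
  (ReflTransGen.lift (fun a => Term.pi a B) (fun _ _ => Red.piL) _ _ hA).trans
    (ReflTransGen.lift (fun b => Term.pi A' b) (fun _ _ => Red.piR) _ _ hB)

theorem Rs.sigma_congr {A A' B B' : Term} (hA : Rs A A') (hB : Rs B B') :
    Rs (.sigma A B) (.sigma A' B') :=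
  (ReflTransGen.lift (fun a => Term.sigma a B) (fun _ _ => Red.sigmaL) _ _ hA).trans
    (ReflTransGen.lift (fun b => Term.sigma A' b) (fun _ _ => Red.sigmaR) _ _ hB)

theorem Rs.lam_congr {A A' B B' : Term} (hA : Rs A A') (hB : Rs B B') :
    Rs (.lam A B) (.lam A' B') :=
  (ReflTransGen.lift (fun a => Term.lam a B) (fun _ _ => Red.lamL) _ _ hA).trans
    (ReflTransGen.lift (fun b => Term.lam A' b) (fun _ _ => Red.lamR) _ _ hB)

theorem Rs.app_congr {A A' B B' : Term} (hA : Rs A A') (hB : Rs B B') :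
    Rs (.app A B) (.app A' B') :=
  (ReflTransGen.lift (fun a => Term.app a B) (fun _ _ => Red.appL) _ _ hA).trans
    (ReflTransGen.lift (fun b => Term.app A' b) (fun _ _ => Red.appR) _ _ hB)

theorem Rs.pair_congr {A A' B B' C C' : Term} (hA : Rs A A') (hB : Rs B B') (hC : Rs C C') :
    Rs (.pair A B C) (.pair A' B' C') :=
  ((ReflTransGen.lift (fun a => Term.pair a B C) (fun _ _ => Red.pairL) _ _ hA).trans
    (ReflTransGen.lift (fun b => Term.pair A' b C) (fun _ _ => Red.pairR) _ _ hB)).trans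
    (ReflTransGen.lift (fun c => Term.pair A' B' c) (fun _ _ => Red.pairB) _ _ hC)

theorem Rs.proj1_congr {A A' : Term} (hA : Rs A A') : Rs (.proj1 A) (.proj1 A') :=
  ReflTransGen.lift Term.proj1 (fun _ _ => Red.proj1C) _ _ hA

theorem Rs.proj2_congr {A A' : Term} (hA : Rs A A') : Rs (.proj2 A) (.proj2 A') :=
  ReflTransGen.lift Term.proj2 (fun _ _ => Red.proj2C) _ _ hA

theorem Conv.refl (A : Term) : Conv A A := EqvGen.refl A
theorem Conv.symm' {A B : Term} (h : Conv A B) : Conv B A := EqvGen.symm _ _ h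
theorem Conv.trans' {A B C : Term} (h : Conv A B) (h' : Conv B C) : Conv A C :=
  EqvGen.trans _ _ _ h h'

theorem Red.conv {A B : Term} (h : Red A B) : Conv A B := EqvGen.rel _ _ h

theorem Rs.conv {A B : Term} (h : Rs A B) : Conv A B := by
  induction h with
  | refl => exact Conv.refl _
  | tail _ h2 ih => exact ih.trans' (EqvGen.rel _ _ h2)

theorem Conv.congr {f : Term → Term} (hf : ∀ x y, Red x y → Red (f x) (f y))
    {A B : Term} (h : Conv A B) : Conv (f A) (f B) := by
  induction h with
  | rel _ _ h => exact EqvGen.rel _ _ (hf _ _ h)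
  | refl => exact Conv.refl _
  | symm _ _ _ ih => exact ih.symm'
  | trans _ _ _ _ _ ih1 ih2 => exact ih1.trans' ih2

theorem Conv.pi_congr {A A' B B' : Term} (hA : Conv A A') (hB : Conv B B') :
    Conv (.pi A B) (.pi A' B') :=
  (Conv.congr (fun _ _ h => Red.piL h) hA).trans'
    (Conv.congr (fun _ _ h => Red.piR h) hB)

theorem Conv.sigma_congr {A A' B B' : Term} (hA : Conv A A') (hB : Conv B B') :
    Conv (.sigma A B) (.sigma A' B') :=
  (Conv.congr (fun _ _ h => Red.sigmaL h) hA).trans'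
    (Conv.congr (fun _ _ h => Red.sigmaR h) hB)

/-- one-step reduction is stable under lifting -/
theorem Red.lift {t t' : Term} (h : Red t t') (d k : ℕ) :
    Red (ECC.lift d k t) (ECC.lift d k t') := by
  induction h generalizing k with
  | @beta A M N =>
    have : ECC.lift d k (subst0 M N) = subst0 (ECC.lift d (k+1) M) (ECC.lift d k N) := by
      unfold subst0
      rw [lift_subst N M (Nat.zero_le k), Nat.sub_zero]
    rw [this]
    exact Red.beta
  | pr1 => exact Red.pr1
  | pr2 => exact Red.pr2
  | piL _ ih => exact Red.piL (ih k)
  | piR _ ih => exact Red.piR (ih (k+1))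
  | sigmaL _ ih => exact Red.sigmaL (ih k)
  | sigmaR _ ih => exact Red.sigmaR (ih (k+1))
  | lamL _ ih => exact Red.lamL (ih k)
  | lamR _ ih => exact Red.lamR (ih (k+1))
  | appL _ ih => exact Red.appL (ih k)
  | appR _ ih => exact Red.appR (ih k)
  | pairL _ ih => exact Red.pairL (ih k)
  | pairR _ ih => exact Red.pairR (ih k)
  | pairB _ ih => exact Red.pairB (ih k)
  | proj1C _ ih => exact Red.proj1C (ih k)
  | proj2C _ ih => exact Red.proj2C (ih k)

/-- one-step reduction is stable under substitution (in the body) -/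
theorem Red.subst {t t' : Term} (h : Red t t') (N : Term) (k : ℕ) :
    Red (ECC.subst N k t) (ECC.subst N k t') := by
  induction h generalizing k with
  | @beta A M P =>
    have : ECC.subst N k (subst0 M P) =
        subst0 (ECC.subst N (k+1) M) (ECC.subst N k P) := by
      unfold subst0
      rw [subst_subst N P M (Nat.zero_le k), Nat.sub_zero]
    rw [this]
    exact Red.beta
  | pr1 => exact Red.pr1
  | pr2 => exact Red.pr2
  | piL _ ih => exact Red.piL (ih k)
  | piR _ ih => exact Red.piR (ih (k+1))
  | sigmaL _ ih => exact Red.sigmaL (ih k)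
  | sigmaR _ ih => exact Red.sigmaR (ih (k+1))
  | lamL _ ih => exact Red.lamL (ih k)
  | lamR _ ih => exact Red.lamR (ih (k+1))
  | appL _ ih => exact Red.appL (ih k)
  | appR _ ih => exact Red.appR (ih k)
  | pairL _ ih => exact Red.pairL (ih k)
  | pairR _ ih => exact Red.pairR (ih k)
  | pairB _ ih => exact Red.pairB (ih k)
  | proj1C _ ih => exact Red.proj1C (ih k)
  | proj2C _ ih => exact Red.proj2C (ih k)

/-- multi-step reduction in the substituted argument -/
theorem Rs.subst_arg {N N' : Term} (h : Red N N') (t : Term) (k : ℕ) :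
    Rs (ECC.subst N k t) (ECC.subst N' k t) := by
  induction t generalizing k with
  | var n =>
    simp only [ECC.subst]
    split_ifs
    · exact ReflTransGen.refl
    · exact ReflTransGen.single (h.lift k 0)
    · exact ReflTransGen.refl
  | prop => exact ReflTransGen.refl
  | type j => exact ReflTransGen.refl
  | pi A B ihA ihB => exact Rs.pi_congr (ihA k) (ihB (k+1))
  | sigma A B ihA ihB => exact Rs.sigma_congr (ihA k) (ihB (k+1))
  | lam A B ihA ihB => exact Rs.lam_congr (ihA k) (ihB (k+1))
  | app A B ihA ihB => exact Rs.app_congr (ihA k) (ihB k)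
  | pair A B C ihA ihB ihC => exact Rs.pair_congr (ihA k) (ihB k) (ihC k)
  | proj1 A ihA => exact Rs.proj1_congr (ihA k)
  | proj2 A ihA => exact Rs.proj2_congr (ihA k)

theorem Conv.lift {A B : Term} (h : Conv A B) (d k : ℕ) :
    Conv (ECC.lift d k A) (ECC.lift d k B) :=
  Conv.congr (fun _ _ hr => hr.lift d k) h

theorem Conv.subst {A B : Term} (h : Conv A B) (N : Term) (k : ℕ) :
    Conv (ECC.subst N k A) (ECC.subst N k B) :=
  Conv.congr (fun _ _ hr => hr.subst N k) h

theorem Conv.subst_arg {N N' : Term} (h : Conv N N') (t : Term) (k : ℕ) :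
    Conv (ECC.subst N k t) (ECC.subst N' k t) := by
  induction h with
  | rel _ _ h => exact (Rs.subst_arg h t k).conv
  | refl => exact Conv.refl _
  | symm _ _ _ ih => exact ih.symm'
  | trans _ _ _ _ _ ih1 ih2 => exact ih1.trans' ih2

theorem Cum.refl (A : Term) : Cum A A := Cum.conv (Conv.refl A)

theorem Cum.lift {A B : Term} (h : Cum A B) (d k : ℕ) :
    Cum (ECC.lift d k A) (ECC.lift d k B) := by
  induction h generalizing k with
  | conv h => exact Cum.conv (h.lift d k)
  | propType => exact Cum.propType
  | typeType h => exact Cum.typeType h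
  | pi hc _ ih => exact Cum.pi (hc.lift d k) (ih (k+1))
  | sigma _ _ ih1 ih2 => exact Cum.sigma (ih1 k) (ih2 (k+1))
  | trans _ _ ih1 ih2 => exact (ih1 k).trans (ih2 k)

theorem Cum.subst {A B : Term} (h : Cum A B) (N : Term) (k : ℕ) :
    Cum (ECC.subst N k A) (ECC.subst N k B) := by
  induction h generalizing k with
  | conv h => exact Cum.conv (h.subst N k)
  | propType => exact Cum.propType
  | typeType h => exact Cum.typeType h
  | pi hc _ ih => exact Cum.pi (hc.subst N k) (ih (k+1))
  | sigma _ _ ih1 ih2 => exact Cum.sigma (ih1 k) (ih2 (k+1))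
  | trans _ _ ih1 ih2 => exact (ih1 k).trans (ih2 k)

end ECC
namespace ECC

open Relation

/-- Parallel reduction. -/
inductive Par : Term → Term → Prop
  | var   : Par (.var n) (.var n)
  | prop  : Par .prop .prop
  | type  : Par (.type j) (.type j)
  | pi    : Par A A' → Par B B' → Par (.pi A B) (.pi A' B')
  | sigma : Par A A' → Par B B' → Par (.sigma A B) (.sigma A' B')
  | lam   : Par A A' → Par M M' → Par (.lam A M) (.lam A' M')
  | app   : Par M M' → Par N N' → Par (.app M N) (.app M' N')
  | pair  : Par M M' → Par N N' → Par B B' → Par (.pair M N B) (.pair M' N' B')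
  | proj1 : Par M M' → Par (.proj1 M) (.proj1 M')
  | proj2 : Par M M' → Par (.proj2 M) (.proj2 M')
  | beta  : Par M M' → Par N N' → Par (.app (.lam A M) N) (subst0 M' N')
  | pr1   : Par M M' → Par (.proj1 (.pair M N B)) M'
  | pr2   : Par N N' → Par (.proj2 (.pair M N B)) N'

theorem Par.refl (t : Term) : Par t t := by
  induction t with
  | var n => exact Par.var
  | prop => exact Par.prop
  | type j => exact Par.type
  | pi A B ihA ihB => exact Par.pi ihA ihB
  | sigma A B ihA ihB => exact Par.sigma ihA ihB
  | lam A B ihA ihB => exact Par.lam ihA ihB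
  | app A B ihA ihB => exact Par.app ihA ihB
  | pair A B C ihA ihB ihC => exact Par.pair ihA ihB ihC
  | proj1 A ihA => exact Par.proj1 ihA
  | proj2 A ihA => exact Par.proj2 ihA

theorem Red.par {t t' : Term} (h : Red t t') : Par t t' := by
  induction h with
  | beta => exact Par.beta (Par.refl _) (Par.refl _)
  | pr1 => exact Par.pr1 (Par.refl _)
  | pr2 => exact Par.pr2 (Par.refl _)
  | piL h ih => exact Par.pi ih (Par.refl _)
  | piR h ih => exact Par.pi (Par.refl _) ih
  | sigmaL h ih => exact Par.sigma ih (Par.refl _)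
  | sigmaR h ih => exact Par.sigma (Par.refl _) ih
  | lamL h ih => exact Par.lam ih (Par.refl _)
  | lamR h ih => exact Par.lam (Par.refl _) ih
  | appL h ih => exact Par.app ih (Par.refl _)
  | appR h ih => exact Par.app (Par.refl _) ih
  | pairL h ih => exact Par.pair ih (Par.refl _) (Par.refl _)
  | pairR h ih => exact Par.pair (Par.refl _) ih (Par.refl _)
  | pairB h ih => exact Par.pair (Par.refl _) (Par.refl _) ih
  | proj1C h ih => exact Par.proj1 ih
  | proj2C h ih => exact Par.proj2 ih

theorem Par.rs {t t' : Term} (h : Par t t') : Rs t t' := by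
  induction h with
  | var => exact ReflTransGen.refl
  | prop => exact ReflTransGen.refl
  | type => exact ReflTransGen.refl
  | pi _ _ ih1 ih2 => exact Rs.pi_congr ih1 ih2
  | sigma _ _ ih1 ih2 => exact Rs.sigma_congr ih1 ih2
  | lam _ _ ih1 ih2 => exact Rs.lam_congr ih1 ih2
  | app _ _ ih1 ih2 => exact Rs.app_congr ih1 ih2
  | pair _ _ _ ih1 ih2 ih3 => exact Rs.pair_congr ih1 ih2 ih3
  | proj1 _ ih => exact Rs.proj1_congr ih
  | proj2 _ ih => exact Rs.proj2_congr ih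
  | @beta M M' N N' A _ _ ih1 ih2 =>
    exact ReflTransGen.tail
      (Rs.app_congr (Rs.lam_congr ReflTransGen.refl ih1) ih2) Red.beta
  | @pr1 M M' N B _ ih =>
    exact ReflTransGen.head Red.pr1 ih
  | @pr2 N N' M B _ ih =>
    exact ReflTransGen.head Red.pr2 ih

theorem Par.lift {t t' : Term} (h : Par t t') (d k : ℕ) :
    Par (ECC.lift d k t) (ECC.lift d k t') := by
  induction h generalizing k with
  | var => exact Par.refl _
  | prop => exact Par.prop
  | type => exact Par.type
  | pi _ _ ih1 ih2 => exact Par.pi (ih1 k) (ih2 (k+1))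
  | sigma _ _ ih1 ih2 => exact Par.sigma (ih1 k) (ih2 (k+1))
  | lam _ _ ih1 ih2 => exact Par.lam (ih1 k) (ih2 (k+1))
  | app _ _ ih1 ih2 => exact Par.app (ih1 k) (ih2 k)
  | pair _ _ _ ih1 ih2 ih3 => exact Par.pair (ih1 k) (ih2 k) (ih3 k)
  | proj1 _ ih => exact Par.proj1 (ih k)
  | proj2 _ ih => exact Par.proj2 (ih k)
  | @beta M M' N N' A _ _ ih1 ih2 =>
    have e : ECC.lift d k (subst0 M' N') =
        subst0 (ECC.lift d (k+1) M') (ECC.lift d k N') := by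
      unfold subst0
      rw [lift_subst N' M' (Nat.zero_le k), Nat.sub_zero]
    rw [e]
    exact Par.beta (ih1 (k+1)) (ih2 k)
  | pr1 _ ih => exact Par.pr1 (ih k)
  | pr2 _ ih => exact Par.pr2 (ih k)

theorem Par.subst {t t' n n' : Term} (h : Par t t') (hn : Par n n') (k : ℕ) :
    Par (ECC.subst n k t) (ECC.subst n' k t') := by
  induction h generalizing k with
  | @var m =>
    simp only [ECC.subst]
    split_ifs
    · exact Par.var
    · exact hn.lift k 0
    · exact Par.var
  | prop => exact Par.prop
  | type => exact Par.type
  | pi _ _ ih1 ih2 => exact Par.pi (ih1 k) (ih2 (k+1))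
  | sigma _ _ ih1 ih2 => exact Par.sigma (ih1 k) (ih2 (k+1))
  | lam _ _ ih1 ih2 => exact Par.lam (ih1 k) (ih2 (k+1))
  | app _ _ ih1 ih2 => exact Par.app (ih1 k) (ih2 k)
  | pair _ _ _ ih1 ih2 ih3 => exact Par.pair (ih1 k) (ih2 k) (ih3 k)
  | proj1 _ ih => exact Par.proj1 (ih k)
  | proj2 _ ih => exact Par.proj2 (ih k)
  | @beta M M' N N' A _ _ ih1 ih2 =>
    have e : ECC.subst n' k (subst0 M' N') =
        subst0 (ECC.subst n' (k+1) M') (ECC.subst n' k N') := by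
      unfold subst0
      rw [subst_subst n' N' M' (Nat.zero_le k), Nat.sub_zero]
    rw [e]
    exact Par.beta (ih1 (k+1)) (ih2 k)
  | pr1 _ ih => exact Par.pr1 (ih k)
  | pr2 _ ih => exact Par.pr2 (ih k)

/-- The complete development. -/
def rho : Term → Term
  | .app (.lam _ M) N => subst0 (rho M) (rho N)
  | .app M N => .app (rho M) (rho N)
  | .proj1 (.pair M _ _) => rho M
  | .proj1 M => .proj1 (rho M)
  | .proj2 (.pair _ N _) => rho N
  | .proj2 M => .proj2 (rho M)
  | .pi A B => .pi (rho A) (rho B)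
  | .sigma A B => .sigma (rho A) (rho B)
  | .lam A M => .lam (rho A) (rho M)
  | .pair M N B => .pair (rho M) (rho N) (rho B)
  | t => t

theorem Par.triangle {t u : Term} (h : Par t u) : Par u (rho t) := by
  induction h with
  | var => exact Par.var
  | prop => exact Par.prop
  | type => exact Par.type
  | pi _ _ ih1 ih2 => exact Par.pi ih1 ih2
  | sigma _ _ ih1 ih2 => exact Par.sigma ih1 ih2
  | lam _ _ ih1 ih2 => exact Par.lam ih1 ih2
  | @app M M' N N' hM hN ih1 ih2 =>
    match M, hM, ih1 with
    | .lam A M0, hM, ih1 =>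
      cases hM with
      | lam hA hM0 =>
        cases ih1 with
        | lam ihA ihM0 =>
          exact Par.beta ihM0 ih2
    | .var n, _, ih1 => exact Par.app ih1 ih2
    | .prop, _, ih1 => exact Par.app ih1 ih2
    | .type j, _, ih1 => exact Par.app ih1 ih2
    | .pi A B, _, ih1 => exact Par.app ih1 ih2
    | .sigma A B, _, ih1 => exact Par.app ih1 ih2
    | .app P Q, _, ih1 => exact Par.app ih1 ih2
    | .pair P Q B, _, ih1 => exact Par.app ih1 ih2
    | .proj1 P, _, ih1 => exact Par.app ih1 ih2
    | .proj2 P, _, ih1 => exact Par.app ih1 ih2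
  | @proj1 M M' hM ih =>
    match M, hM, ih with
    | .pair P Q B, hM, ih =>
      cases hM with
      | pair hP hQ hB =>
        cases ih with
        | pair ihP ihQ ihB => exact Par.pr1 ihP
    | .var n, _, ih => exact Par.proj1 ih
    | .prop, _, ih => exact Par.proj1 ih
    | .type j, _, ih => exact Par.proj1 ih
    | .pi A B, _, ih => exact Par.proj1 ih
    | .sigma A B, _, ih => exact Par.proj1 ih
    | .app P Q, _, ih => exact Par.proj1 ih
    | .lam A P, _, ih => exact Par.proj1 ih
    | .proj1 P, _, ih => exact Par.proj1 ih
    | .proj2 P, _, ih => exact Par.proj1 ih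
  | @proj2 M M' hM ih =>
    match M, hM, ih with
    | .pair P Q B, hM, ih =>
      cases hM with
      | pair hP hQ hB =>
        cases ih with
        | pair ihP ihQ ihB => exact Par.pr2 ihQ
    | .var n, _, ih => exact Par.proj2 ih
    | .prop, _, ih => exact Par.proj2 ih
    | .type j, _, ih => exact Par.proj2 ih
    | .pi A B, _, ih => exact Par.proj2 ih
    | .sigma A B, _, ih => exact Par.proj2 ih
    | .app P Q, _, ih => exact Par.proj2 ih
    | .lam A P, _, ih => exact Par.proj2 ih
    | .proj1 P, _, ih => exact Par.proj2 ih
    | .proj2 P, _, ih => exact Par.proj2 ih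
  | pair _ _ _ ih1 ih2 ih3 => exact Par.pair ih1 ih2 ih3
  | beta _ _ ih1 ih2 => exact Par.subst ih1 ih2 0
  | pr1 _ ih => exact ih
  | pr2 _ ih => exact ih

theorem Par.diamond {t u v : Term} (h1 : Par t u) (h2 : Par t v) :
    ∃ w, Par u w ∧ Par v w :=
  ⟨rho t, h1.triangle, h2.triangle⟩

abbrev ParS : Term → Term → Prop := ReflTransGen Par

theorem par_strip {a b c : Term} (hab : Par a b) (hac : ParS a c) :
    ∃ d, ParS b d ∧ Par c d := by
  induction hac generalizing b with
  | refl => exact ⟨b, ReflTransGen.refl, hab⟩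
  | @tail x y hax hxy ih =>
    obtain ⟨d, hbd, hxd⟩ := ih hab
    obtain ⟨e, hde, hye⟩ := Par.diamond hxd hxy
    exact ⟨e, hbd.tail hde, hye⟩

theorem parS_diamond {a b c : Term} (h1 : ParS a b) (h2 : ParS a c) :
    ∃ d, ParS b d ∧ ParS c d := by
  induction h1 with
  | refl => exact ⟨c, h2, ReflTransGen.refl⟩
  | @tail x y hax hxy ih =>
    obtain ⟨d, hxd, hcd⟩ := ih
    obtain ⟨e, hye, hde⟩ := par_strip hxy hxd
    exact ⟨e, hye, hcd.tail hde⟩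

theorem rs_iff_parS {a b : Term} : Rs a b ↔ ParS a b := by
  constructor
  · exact fun h => ReflTransGen.mono (fun _ _ h => Red.par h) _ _ h
  · intro h
    induction h with
    | refl => exact ReflTransGen.refl
    | tail _ h2 ih => exact ih.trans h2.rs

theorem rs_diamond {a b c : Term} (h1 : Rs a b) (h2 : Rs a c) :
    ∃ d, Rs b d ∧ Rs c d := by
  obtain ⟨d, hd1, hd2⟩ := parS_diamond (rs_iff_parS.1 h1) (rs_iff_parS.1 h2)
  exact ⟨d, rs_iff_parS.2 hd1, rs_iff_parS.2 hd2⟩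

/-- Church–Rosser. -/
theorem conv_join {a b : Term} (h : Conv a b) : ∃ c, Rs a c ∧ Rs b c := by
  induction h with
  | rel _ _ h => exact ⟨_, ReflTransGen.single h, ReflTransGen.refl⟩
  | refl => exact ⟨_, ReflTransGen.refl, ReflTransGen.refl⟩
  | symm _ _ _ ih => obtain ⟨c, h1, h2⟩ := ih; exact ⟨c, h2, h1⟩
  | trans x y z _ _ ih1 ih2 =>
    obtain ⟨c, h1, h2⟩ := ih1
    obtain ⟨d, h3, h4⟩ := ih2
    obtain ⟨e, h5, h6⟩ := rs_diamond h2 h3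
    exact ⟨e, h1.trans h5, h4.trans h6⟩

/-- Shape lemmas. -/
theorem rs_prop {x : Term} (h : Rs .prop x) : x = .prop := by
  induction h with
  | refl => rfl
  | tail _ h2 ih => subst ih; cases h2

theorem rs_type {j : ℕ} {x : Term} (h : Rs (.type j) x) : x = .type j := by
  induction h with
  | refl => rfl
  | tail _ h2 ih => subst ih; cases h2

theorem rs_pi {A B x : Term} (h : Rs (.pi A B) x) :
    ∃ A' B', x = .pi A' B' ∧ Rs A A' ∧ Rs B B' := by
  induction h with
  | refl => exact ⟨A, B, rfl, ReflTransGen.refl, ReflTransGen.refl⟩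
  | tail _ h2 ih =>
    obtain ⟨A', B', rfl, hA, hB⟩ := ih
    cases h2 with
    | piL h => exact ⟨_, _, rfl, hA.tail h, hB⟩
    | piR h => exact ⟨_, _, rfl, hA, hB.tail h⟩

theorem rs_sigma {A B x : Term} (h : Rs (.sigma A B) x) :
    ∃ A' B', x = .sigma A' B' ∧ Rs A A' ∧ Rs B B' := by
  induction h with
  | refl => exact ⟨A, B, rfl, ReflTransGen.refl, ReflTransGen.refl⟩
  | tail _ h2 ih =>
    obtain ⟨A', B', rfl, hA, hB⟩ := ih
    cases h2 with
    | sigmaL h => exact ⟨_, _, rfl, hA.tail h, hB⟩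
    | sigmaR h => exact ⟨_, _, rfl, hA, hB.tail h⟩

theorem conv_pi_pi {A B A' B' : Term} (h : Conv (.pi A B) (.pi A' B')) :
    Conv A A' ∧ Conv B B' := by
  obtain ⟨c, h1, h2⟩ := conv_join h
  obtain ⟨A1, B1, rfl, hA1, hB1⟩ := rs_pi h1
  obtain ⟨A2, B2, he, hA2, hB2⟩ := rs_pi h2
  cases he
  exact ⟨hA1.conv.trans' hA2.conv.symm', hB1.conv.trans' hB2.conv.symm'⟩

theorem conv_sigma_sigma {A B A' B' : Term} (h : Conv (.sigma A B) (.sigma A' B')) :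
    Conv A A' ∧ Conv B B' := by
  obtain ⟨c, h1, h2⟩ := conv_join h
  obtain ⟨A1, B1, rfl, hA1, hB1⟩ := rs_sigma h1
  obtain ⟨A2, B2, he, hA2, hB2⟩ := rs_sigma h2
  cases he
  exact ⟨hA1.conv.trans' hA2.conv.symm', hB1.conv.trans' hB2.conv.symm'⟩

theorem not_conv_prop_pi {A B : Term} (h : Conv .prop (.pi A B)) : False := by
  obtain ⟨c, h1, h2⟩ := conv_join h
  obtain ⟨A', B', rfl, -, -⟩ := rs_pi h2
  exact absurd (rs_prop h1) (by simp)

theorem not_conv_type_pi {j : ℕ} {A B : Term} (h : Conv (.type j) (.pi A B)) : False := by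
  obtain ⟨c, h1, h2⟩ := conv_join h
  obtain ⟨A', B', rfl, -, -⟩ := rs_pi h2
  exact absurd (rs_type h1) (by simp)

theorem not_conv_prop_sigma {A B : Term} (h : Conv .prop (.sigma A B)) : False := by
  obtain ⟨c, h1, h2⟩ := conv_join h
  obtain ⟨A', B', rfl, -, -⟩ := rs_sigma h2
  exact absurd (rs_prop h1) (by simp)

theorem not_conv_type_sigma {j : ℕ} {A B : Term} (h : Conv (.type j) (.sigma A B)) : False := by
  obtain ⟨c, h1, h2⟩ := conv_join h
  obtain ⟨A', B', rfl, -, -⟩ := rs_sigma h2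
  exact absurd (rs_type h1) (by simp)

theorem not_conv_sigma_pi {C D A B : Term} (h : Conv (.sigma C D) (.pi A B)) : False := by
  obtain ⟨c, h1, h2⟩ := conv_join h
  obtain ⟨A', B', rfl, -, -⟩ := rs_pi h2
  obtain ⟨A2, B2, he, -, -⟩ := rs_sigma h1
  simp at he

theorem not_conv_prop_type {j : ℕ} (h : Conv .prop (.type j)) : False := by
  obtain ⟨c, h1, h2⟩ := conv_join h
  rw [rs_prop h1] at h2
  exact absurd (rs_type h2) (by simp)

theorem conv_type_type {j k : ℕ} (h : Conv (.type j) (.type k)) : j = k := by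
  obtain ⟨c, h1, h2⟩ := conv_join h
  rw [rs_type h1] at h2
  have := rs_type h2
  simp_all

end ECC
namespace ECC

theorem cum_pi_inv {X Y A B : Term} (h : Cum X Y) (hY : Conv Y (.pi A B)) :
    ∃ a b, Conv X (.pi a b) ∧ Conv a A ∧ Cum b B := by
  induction h generalizing A B with
  | conv h => exact ⟨A, B, h.trans' hY, Conv.refl A, Cum.refl B⟩
  | propType => exact absurd hY not_conv_type_pi
  | typeType _ => exact absurd hY not_conv_type_pi
  | @pi A0 A0' B0 B0' hc hB ih =>
    obtain ⟨h1, h2⟩ := conv_pi_pi hY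
    exact ⟨A0, B0, Conv.refl _, hc.trans' h1, hB.trans (Cum.conv h2)⟩
  | sigma _ _ _ _ => exact absurd hY not_conv_sigma_pi
  | trans _ _ ih1 ih2 =>
    obtain ⟨a, b, hZ, haA, hbB⟩ := ih2 hY
    obtain ⟨a', b', hX, ha'a, hb'b⟩ := ih1 hZ
    exact ⟨a', b', hX, ha'a.trans' haA, hb'b.trans hbB⟩

theorem cum_sigma_inv {X Y A B : Term} (h : Cum X Y) (hY : Conv Y (.sigma A B)) :
    ∃ a b, Conv X (.sigma a b) ∧ Cum a A ∧ Cum b B := by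
  induction h generalizing A B with
  | conv h => exact ⟨A, B, h.trans' hY, Cum.refl A, Cum.refl B⟩
  | propType => exact absurd hY not_conv_type_sigma
  | typeType _ => exact absurd hY not_conv_type_sigma
  | pi _ _ _ => exact absurd hY.symm' not_conv_sigma_pi
  | @sigma A0 A0' B0 B0' hA hB ihA ihB =>
    obtain ⟨h1, h2⟩ := conv_sigma_sigma hY
    exact ⟨A0, B0, Conv.refl _, hA.trans (Cum.conv h1), hB.trans (Cum.conv h2)⟩
  | trans _ _ ih1 ih2 =>
    obtain ⟨a, b, hZ, haA, hbB⟩ := ih2 hY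
    obtain ⟨a', b', hX, ha'a, hb'b⟩ := ih1 hZ
    exact ⟨a', b', hX, ha'a.trans haA, hb'b.trans hbB⟩

theorem cum_pi_pi {A B A' B' : Term} (h : Cum (.pi A B) (.pi A' B')) :
    Conv A A' ∧ Cum B B' := by
  obtain ⟨a, b, hX, haA, hbB⟩ := cum_pi_inv h (Conv.refl _)
  obtain ⟨h1, h2⟩ := conv_pi_pi hX
  exact ⟨h1.trans' haA, (Cum.conv h2).trans hbB⟩

theorem cum_sigma_sigma {A B A' B' : Term} (h : Cum (.sigma A B) (.sigma A' B')) :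
    Cum A A' ∧ Cum B B' := by
  obtain ⟨a, b, hX, haA, hbB⟩ := cum_sigma_inv h (Conv.refl _)
  obtain ⟨h1, h2⟩ := conv_sigma_sigma hX
  exact ⟨(Cum.conv h1).trans haA, (Cum.conv h2).trans hbB⟩

/-- every suffix of a valid context is valid -/
theorem Valid.suffix {Γ : List Term} (h : Valid Γ) :
    ∀ Δ Γ', Γ = Δ ++ Γ' → Valid Γ' := by
  refine @Valid.rec (fun Γ _ => ∀ Δ Γ', Γ = Δ ++ Γ' → Valid Γ')
    (fun Γ _ _ _ => ∀ Δ Γ', Γ = Δ ++ Γ' → Valid Γ')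
    ?_ ?_ ?_ ?_ ?_ ?_ ?_ ?_ ?_ ?_ ?_ ?_ ?_ ?_ Γ h
  · intro Δ Γ' he
    rw [eq_comm, List.append_eq_nil_iff] at he
    rw [he.2]; exact Valid.nil
  · intro Γ A j ht ih Δ Γ' he
    cases Δ with
    | nil => simp at he; rw [← he]; exact Valid.cons ht
    | cons C Δ' =>
      simp only [List.cons_append, List.cons.injEq] at he
      exact ih Δ' Γ' he.2
  · intro Γ hv ih; exact ih
  · intro Γ j hv ih; exact ih
  · intro Γ n A hv hg ih; exact ih
  · intro Γ A j B h1 h2 ih1 ih2; exact ih1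
  · intro Γ A j B h1 h2 ih1 ih2; exact ih1
  · intro Γ A j B h1 h2 ih1 ih2; exact ih1
  · intro A Γ M B h ih
    exact fun Δ Γ' he => ih (A :: Δ) Γ' (by rw [he]; rfl)
  · intro Γ M A B N h1 h2 ih1 ih2; exact ih1
  · intro Γ M A N B j h1 h2 h3 ih1 ih2 ih3; exact ih1
  · intro Γ M A B h ih; exact ih
  · intro Γ M A B h ih; exact ih
  · intro Γ M A B j h1 h2 hc ih1 ih2; exact ih1

theorem Typing.valid_suffix {Γ : List Term} {M A : Term} (h : Typing Γ M A) :
    ∀ Δ Γ', Γ = Δ ++ Γ' → Valid Γ' := by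
  refine @Typing.rec (fun Γ _ => ∀ Δ Γ', Γ = Δ ++ Γ' → Valid Γ')
    (fun Γ _ _ _ => ∀ Δ Γ', Γ = Δ ++ Γ' → Valid Γ')
    ?_ ?_ ?_ ?_ ?_ ?_ ?_ ?_ ?_ ?_ ?_ ?_ ?_ ?_ Γ M A h
  · intro Δ Γ' he
    rw [eq_comm, List.append_eq_nil_iff] at he
    rw [he.2]; exact Valid.nil
  · intro Γ A j ht ih Δ Γ' he
    cases Δ with
    | nil => simp at he; rw [← he]; exact Valid.cons ht
    | cons C Δ' =>
      simp only [List.cons_append, List.cons.injEq] at he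
      exact ih Δ' Γ' he.2
  · intro Γ hv ih; exact ih
  · intro Γ j hv ih; exact ih
  · intro Γ n A hv hg ih; exact ih
  · intro Γ A j B h1 h2 ih1 ih2; exact ih1
  · intro Γ A j B h1 h2 ih1 ih2; exact ih1
  · intro Γ A j B h1 h2 ih1 ih2; exact ih1
  · intro A Γ M B h ih
    exact fun Δ Γ' he => ih (A :: Δ) Γ' (by rw [he]; rfl)
  · intro Γ M A B N h1 h2 ih1 ih2; exact ih1
  · intro Γ M A N B j h1 h2 h3 ih1 ih2 ih3; exact ih1
  · intro Γ M A B h ih; exact ih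
  · intro Γ M A B h ih; exact ih
  · intro Γ M A B j h1 h2 hc ih1 ih2; exact ih1

theorem Typing.valid {Γ : List Term} {M A : Term} (h : Typing Γ M A) : Valid Γ :=
  h.valid_suffix [] Γ rfl

theorem Valid.tail {Γ : List Term} {A : Term} (h : Valid (A :: Γ)) : Valid Γ :=
  h.suffix [A] Γ rfl

theorem Valid.head {Γ : List Term} {A : Term} (h : Valid (A :: Γ)) :
    ∃ j, Typing Γ A (.type j) := by
  cases h with
  | cons ht => exact ⟨_, ht⟩

end ECC
namespace ECC

/-- The generation (inversion) predicate. -/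
def Gen (Γ : List Term) : Term → Term → Prop
  | .var n, σ => ∃ A, Γ[n]? = some A ∧ Cum (lift (n+1) 0 A) σ
  | .prop, σ => Cum (.type 0) σ
  | .type j, σ => Cum (.type (j+1)) σ
  | .pi A B, σ => ∃ j, Typing Γ A (.type j) ∧
      ((Typing (A::Γ) B .prop ∧ Cum .prop σ) ∨ (Typing (A::Γ) B (.type j) ∧ Cum (.type j) σ))
  | .sigma A B, σ => ∃ j, Typing Γ A (.type j) ∧ Typing (A::Γ) B (.type j) ∧ Cum (.type j) σ
  | .lam A M, σ => ∃ B, Typing (A::Γ) M B ∧ Cum (.pi A B) σ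
  | .app M N, σ => ∃ A B, Typing Γ M (.pi A B) ∧ Typing Γ N A ∧ Cum (subst0 B N) σ
  | .pair M N T, σ => ∃ A B j, T = .sigma A B ∧ Typing Γ M A ∧ Typing Γ N (subst0 B M) ∧
      Typing (A::Γ) B (.type j) ∧ Cum (.sigma A B) σ
  | .proj1 M, σ => ∃ A B, Typing Γ M (.sigma A B) ∧ Cum A σ
  | .proj2 M, σ => ∃ A B, Typing Γ M (.sigma A B) ∧ Cum (subst0 B (.proj1 M)) σ

theorem Gen.cum {Γ : List Term} {t σ σ' : Term} (h : Gen Γ t σ) (hc : Cum σ σ') :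
    Gen Γ t σ' := by
  cases t with
  | var n => simp only [Gen] at h ⊢; obtain ⟨A, h1, h2⟩ := h; exact ⟨A, h1, h2.trans hc⟩
  | prop => simp only [Gen] at h ⊢; exact h.trans hc
  | type j => simp only [Gen] at h ⊢; exact h.trans hc
  | pi A B =>
    simp only [Gen] at h ⊢
    obtain ⟨j, h1, h2 | h2⟩ := h
    · exact ⟨j, h1, Or.inl ⟨h2.1, h2.2.trans hc⟩⟩
    · exact ⟨j, h1, Or.inr ⟨h2.1, h2.2.trans hc⟩⟩
  | sigma A B => simp only [Gen] at h ⊢; obtain ⟨j, h1, h2, h3⟩ := h; exact ⟨j, h1, h2, h3.trans hc⟩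
  | lam A M => simp only [Gen] at h ⊢; obtain ⟨B, h1, h2⟩ := h; exact ⟨B, h1, h2.trans hc⟩
  | app M N => simp only [Gen] at h ⊢; obtain ⟨A, B, h1, h2, h3⟩ := h; exact ⟨A, B, h1, h2, h3.trans hc⟩
  | pair M N T =>
    simp only [Gen] at h ⊢
    obtain ⟨A, B, j, h1, h2, h3, h4, h5⟩ := h
    exact ⟨A, B, j, h1, h2, h3, h4, h5.trans hc⟩
  | proj1 M => simp only [Gen] at h ⊢; obtain ⟨A, B, h1, h2⟩ := h; exact ⟨A, B, h1, h2.trans hc⟩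
  | proj2 M => simp only [Gen] at h ⊢; obtain ⟨A, B, h1, h2⟩ := h; exact ⟨A, B, h1, h2.trans hc⟩

theorem Typing.gen {Γ : List Term} {t σ : Term} (h : Typing Γ t σ) : Gen Γ t σ := by
  refine @Typing.rec (fun _ _ => True) (fun Γ t σ _ => Gen Γ t σ)
    ?_ ?_ ?_ ?_ ?_ ?_ ?_ ?_ ?_ ?_ ?_ ?_ ?_ ?_ Γ t σ h
  · trivial
  · intros; trivial
  · intro Γ hv _; simp only [Gen]; exact Cum.refl _
  · intro Γ j hv _; simp only [Gen]; exact Cum.refl _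
  · intro Γ n A hv hg _; simp only [Gen]; exact ⟨A, hg, Cum.refl _⟩
  · intro Γ A j B h1 h2 _ _; simp only [Gen]; exact ⟨j, h1, Or.inl ⟨h2, Cum.refl _⟩⟩
  · intro Γ A j B h1 h2 _ _; simp only [Gen]; exact ⟨j, h1, Or.inr ⟨h2, Cum.refl _⟩⟩
  · intro Γ A j B h1 h2 _ _; simp only [Gen]; exact ⟨j, h1, h2, Cum.refl _⟩
  · intro A Γ M B h _; simp only [Gen]; exact ⟨B, h, Cum.refl _⟩
  · intro Γ M A B N h1 h2 _ _; simp only [Gen]; exact ⟨A, B, h1, h2, Cum.refl _⟩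
  · intro Γ M A N B j h1 h2 h3 _ _ _; simp only [Gen]; exact ⟨A, B, j, rfl, h1, h2, h3, Cum.refl _⟩
  · intro Γ M A B h _; simp only [Gen]; exact ⟨A, B, h, Cum.refl _⟩
  · intro Γ M A B h _; simp only [Gen]; exact ⟨A, B, h, Cum.refl _⟩
  · intro Γ M A B j h1 h2 hc ih _; exact ih.cum hc

end ECC
namespace ECC

/-- Lift a context prefix for insertion below it. -/
def liftCtx : List Term → List Term
  | [] => []
  | A :: Δ => lift 1 Δ.length A :: liftCtx Δ

theorem liftCtx_length (Δ : List Term) : (liftCtx Δ).length = Δ.length := by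
  induction Δ with
  | nil => rfl
  | cons C Δ ih => simp [liftCtx, ih]

theorem liftCtx_get {Δ : List Term} {n : ℕ} {A : Term} (h : Δ[n]? = some A) :
    (liftCtx Δ)[n]? = some (lift 1 (Δ.length - n - 1) A) := by
  induction Δ generalizing n with
  | nil => simp at h
  | cons C Δ ih =>
    cases n with
    | zero =>
      simp only [List.getElem?_cons_zero] at h
      cases h
      simp [liftCtx]
    | succ n =>
      simp only [List.getElem?_cons_succ, liftCtx] at h ⊢
      rw [ih h]
      have e : (C :: Δ).length - (n+1) - 1 = Δ.length - n - 1 := by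
        simp only [List.length_cons]; omega
      rw [e]

/-- Weakening / thinning. -/
theorem typing_weaken {Γt : List Term} {M B : Term} (h : Typing Γt M B) :
    ∀ Δ Γ₀ C jC, Γt = Δ ++ Γ₀ → Typing Γ₀ C (.type jC) →
      Typing (liftCtx Δ ++ C :: Γ₀) (lift 1 Δ.length M) (lift 1 Δ.length B) := by
  refine @Typing.rec
    (fun Γt _ => ∀ Δ Γ₀ C jC, Γt = Δ ++ Γ₀ → Typing Γ₀ C (.type jC) →
      Valid (liftCtx Δ ++ C :: Γ₀))
    (fun Γt M B _ => ∀ Δ Γ₀ C jC, Γt = Δ ++ Γ₀ → Typing Γ₀ C (.type jC) →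
      Typing (liftCtx Δ ++ C :: Γ₀) (lift 1 Δ.length M) (lift 1 Δ.length B))
    ?_ ?_ ?_ ?_ ?_ ?_ ?_ ?_ ?_ ?_ ?_ ?_ ?_ ?_ Γt M B h
  · intro Δ Γ₀ C jC he hC
    rw [eq_comm, List.append_eq_nil_iff] at he
    obtain ⟨rfl, rfl⟩ := he
    exact Valid.cons hC
  · intro Γ A j ht ih Δ Γ₀ C jC he hC
    cases Δ with
    | nil =>
      simp only [List.nil_append] at he
      subst he
      exact Valid.cons hC
    | cons D Δ' =>
      simp only [List.cons_append, List.cons.injEq] at he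
      obtain ⟨rfl, he⟩ := he
      exact Valid.cons (ih Δ' Γ₀ C jC he hC)
  · intro Γ hv ihv Δ Γ₀ C jC he hC
    exact Typing.prop (ihv Δ Γ₀ C jC he hC)
  · intro Γ j hv ihv Δ Γ₀ C jC he hC
    exact Typing.type (ihv Δ Γ₀ C jC he hC)
  · intro Γ n A hv hg ihv Δ Γ₀ C jC he hC
    subst he
    by_cases hn : n < Δ.length
    · have hΔ : Δ[n]? = some A := by
        rw [← List.getElem?_append_left hn]; exact hg
      have hg' : (liftCtx Δ ++ C :: Γ₀)[n]? = some (lift 1 (Δ.length - n - 1) A) := by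
        rw [List.getElem?_append_left (by rw [liftCtx_length]; exact hn)]
        exact liftCtx_get hΔ
      have hT := Typing.var (ihv Δ Γ₀ C jC rfl hC) hg'
      have e1 : lift 1 Δ.length (Term.var n) = Term.var n := by
        simp [lift, hn]
      have e2 : lift 1 Δ.length (lift (n+1) 0 A) =
          lift (n+1) 0 (lift 1 (Δ.length - n - 1) A) := by
        rw [lift_lift_perm A (Nat.zero_le _)]
        congr 1
        omega
      rw [e1, e2]; exact hT
    · have hg0 : Γ₀[n - Δ.length]? = some A := by
        rw [← List.getElem?_append_right (le_of_not_gt hn)]; exact hg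
      have hg' : (liftCtx Δ ++ C :: Γ₀)[n+1]? = some A := by
        rw [List.getElem?_append_right (by rw [liftCtx_length]; omega), liftCtx_length]
        have e : n + 1 - Δ.length = (n - Δ.length) + 1 := by omega
        rw [e]
        exact hg0
      have hT := Typing.var (ihv Δ Γ₀ C jC rfl hC) hg'
      have e1 : lift 1 Δ.length (Term.var n) = Term.var (n+1) := by
        simp [lift, hn]
      have e2 : lift 1 Δ.length (lift (n+1) 0 A) = lift (n+1+1) 0 A := by
        rw [lift_lift_merge A (Nat.zero_le _) (by omega)]
        have : 1 + (n+1) = n+1+1 := by omega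
        rw [this]
      rw [e1, e2]; exact hT
  · intro Γ A j B h1 h2 ih1 ih2 Δ Γ₀ C jC he hC
    subst he
    exact Typing.pi1 (ih1 Δ Γ₀ C jC rfl hC) (ih2 (A :: Δ) Γ₀ C jC rfl hC)
  · intro Γ A j B h1 h2 ih1 ih2 Δ Γ₀ C jC he hC
    subst he
    exact Typing.pi2 (ih1 Δ Γ₀ C jC rfl hC) (ih2 (A :: Δ) Γ₀ C jC rfl hC)
  · intro Γ A j B h1 h2 ih1 ih2 Δ Γ₀ C jC he hC
    subst he
    exact Typing.sig (ih1 Δ Γ₀ C jC rfl hC) (ih2 (A :: Δ) Γ₀ C jC rfl hC)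
  · intro A Γ M B h1 ih1 Δ Γ₀ C jC he hC
    subst he
    exact Typing.lam (ih1 (A :: Δ) Γ₀ C jC rfl hC)
  · intro Γ M A B N h1 h2 ih1 ih2 Δ Γ₀ C jC he hC
    subst he
    have e : lift 1 Δ.length (subst0 B N) =
        subst0 (lift 1 (Δ.length + 1) B) (lift 1 Δ.length N) := by
      unfold subst0
      rw [lift_subst N B (Nat.zero_le _), Nat.sub_zero]
    rw [e]
    exact Typing.app (ih1 Δ Γ₀ C jC rfl hC) (ih2 Δ Γ₀ C jC rfl hC)
  · intro Γ M A N B j h1 h2 h3 ih1 ih2 ih3 Δ Γ₀ C jC he hC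
    subst he
    have e : lift 1 Δ.length (subst0 B M) =
        subst0 (lift 1 (Δ.length + 1) B) (lift 1 Δ.length M) := by
      unfold subst0
      rw [lift_subst M B (Nat.zero_le _), Nat.sub_zero]
    have H2 := ih2 Δ Γ₀ C jC rfl hC
    rw [e] at H2
    exact Typing.pair (ih1 Δ Γ₀ C jC rfl hC) H2 (ih3 (A :: Δ) Γ₀ C jC rfl hC)
  · intro Γ M A B h1 ih1 Δ Γ₀ C jC he hC
    subst he
    exact Typing.proj1 (ih1 Δ Γ₀ C jC rfl hC)
  · intro Γ M A B h1 ih1 Δ Γ₀ C jC he hC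
    subst he
    have e : lift 1 Δ.length (subst0 B (.proj1 M)) =
        subst0 (lift 1 (Δ.length + 1) B) (.proj1 (lift 1 Δ.length M)) := by
      unfold subst0
      rw [lift_subst (Term.proj1 M) B (Nat.zero_le _), Nat.sub_zero]
      rfl
    rw [e]
    exact Typing.proj2 (ih1 Δ Γ₀ C jC rfl hC)
  · intro Γ M A B j h1 h2 hc ih1 ih2 Δ Γ₀ C jC he hC
    subst he
    exact Typing.cum (ih1 Δ Γ₀ C jC rfl hC) (ih2 Δ Γ₀ C jC rfl hC) (hc.lift 1 Δ.length)

theorem Typing.weaken1 {Γ : List Term} {M B C : Term} {j : ℕ}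
    (h : Typing Γ M B) (hC : Typing Γ C (.type j)) :
    Typing (C :: Γ) (lift 1 0 M) (lift 1 0 B) :=
  typing_weaken h [] Γ C j rfl hC

theorem Typing.weakenN {Γ : List Term} {M B : Term} (h : Typing Γ M B) :
    ∀ Θ, Valid (Θ ++ Γ) → Typing (Θ ++ Γ) (lift Θ.length 0 M) (lift Θ.length 0 B) := by
  intro Θ
  induction Θ with
  | nil =>
    intro _
    simpa [lift_zero] using h
  | cons C Θ ih =>
    intro hv
    obtain ⟨j, hC⟩ := Valid.head hv
    have H := (ih (hv.tail)).weaken1 hC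
    have e : ∀ t : Term, lift 1 0 (lift Θ.length 0 t) = lift (Θ.length + 1) 0 t := by
      intro t
      rw [lift_lift_merge t (Nat.zero_le _) (Nat.zero_le _)]
      congr 1
      omega
    rw [e, e] at H
    exact H

theorem valid_get {Γ : List Term} {n : ℕ} {A : Term} (hv : Valid Γ)
    (hg : Γ[n]? = some A) :
    ∃ j, Typing Γ (lift (n+1) 0 A) (.type j) := by
  have hlt : n < Γ.length := (List.getElem?_eq_some_iff.mp hg).1
  have hdec2 : Γ = Γ.take n ++ A :: Γ.drop (n+1) := by
    conv_lhs => rw [← List.take_append_drop n Γ]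
    congr 1
    rw [List.drop_eq_getElem_cons hlt]
    congr 1
    exact ((List.getElem?_eq_some_iff.mp hg).2)
  have hdec : Γ = (Γ.take n ++ [A]) ++ Γ.drop (n+1) := by
    rw [List.append_assoc]
    simpa using hdec2
  have hvA : Valid (A :: Γ.drop (n+1)) := hv.suffix (Γ.take n) _ hdec2
  obtain ⟨j, hA⟩ := hvA.head
  have hlen : (Γ.take n ++ [A]).length = n + 1 := by
    simp [List.length_take, Nat.min_eq_left (le_of_lt hlt)]
  have hT := hA.weakenN (Γ.take n ++ [A]) (by rw [← hdec]; exact hv)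
  rw [hlen] at hT
  rw [← hdec] at hT
  exact ⟨j, hT⟩

end ECC
namespace ECC

def substCtx (N : Term) : List Term → List Term
  | [] => []
  | A :: Δ => subst N Δ.length A :: substCtx N Δ

theorem substCtx_length (N : Term) (Δ : List Term) :
    (substCtx N Δ).length = Δ.length := by
  induction Δ with
  | nil => rfl
  | cons C Δ ih => simp [substCtx, ih]

theorem substCtx_get {N : Term} {Δ : List Term} {n : ℕ} {A : Term}
    (h : Δ[n]? = some A) :
    (substCtx N Δ)[n]? = some (subst N (Δ.length - n - 1) A) := by
  induction Δ generalizing n with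
  | nil => simp at h
  | cons C Δ ih =>
    cases n with
    | zero =>
      simp only [List.getElem?_cons_zero] at h
      cases h
      simp [substCtx]
    | succ n =>
      simp only [List.getElem?_cons_succ, substCtx] at h ⊢
      rw [ih h]
      have e : (C :: Δ).length - (n+1) - 1 = Δ.length - n - 1 := by
        simp only [List.length_cons]; omega
      rw [e]

/-- The substitution lemma. -/
theorem typing_subst {Γt : List Term} {M B : Term} (h : Typing Γt M B) :
    ∀ Δ A Γ₀ N, Γt = Δ ++ A :: Γ₀ → Typing Γ₀ N A →
      Typing (substCtx N Δ ++ Γ₀) (subst N Δ.length M) (subst N Δ.length B) := by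
  refine @Typing.rec
    (fun Γt _ => ∀ Δ A Γ₀ N, Γt = Δ ++ A :: Γ₀ → Typing Γ₀ N A →
      Valid (substCtx N Δ ++ Γ₀))
    (fun Γt M B _ => ∀ Δ A Γ₀ N, Γt = Δ ++ A :: Γ₀ → Typing Γ₀ N A →
      Typing (substCtx N Δ ++ Γ₀) (subst N Δ.length M) (subst N Δ.length B))
    ?_ ?_ ?_ ?_ ?_ ?_ ?_ ?_ ?_ ?_ ?_ ?_ ?_ ?_ Γt M B h
  · intro Δ A Γ₀ N he hN
    exact absurd he (by simp)
  · intro Γ A0 j ht ih Δ A Γ₀ N he hN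
    cases Δ with
    | nil =>
      simp only [List.nil_append, List.cons.injEq] at he
      obtain ⟨rfl, rfl⟩ := he
      exact hN.valid
    | cons D Δ' =>
      simp only [List.cons_append, List.cons.injEq] at he
      obtain ⟨rfl, he⟩ := he
      exact Valid.cons (ih Δ' A Γ₀ N he hN)
  · intro Γ hv ihv Δ A Γ₀ N he hN
    exact Typing.prop (ihv Δ A Γ₀ N he hN)
  · intro Γ j hv ihv Δ A Γ₀ N he hN
    exact Typing.type (ihv Δ A Γ₀ N he hN)
  · intro Γ n A0 hv hg ihv Δ A Γ₀ N he hN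
    subst he
    have hval := ihv Δ A Γ₀ N rfl hN
    rcases Nat.lt_trichotomy n Δ.length with hn | hn | hn
    · have hΔ : Δ[n]? = some A0 := by
        rw [← List.getElem?_append_left hn]; exact hg
      have hg' : (substCtx N Δ ++ Γ₀)[n]? = some (subst N (Δ.length - n - 1) A0) := by
        rw [List.getElem?_append_left (by rw [substCtx_length]; exact hn)]
        exact substCtx_get hΔ
      have hT := Typing.var hval hg'
      have e1 : subst N Δ.length (Term.var n) = Term.var n := by
        simp [subst, hn]
      have e2 : subst N Δ.length (lift (n+1) 0 A0) =
          lift (n+1) 0 (subst N (Δ.length - n - 1) A0) := by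
        rw [subst_lift_low N A0 (by omega) (by omega)]
        have e : Δ.length - (n+1) = Δ.length - n - 1 := by omega
        rw [e]
      rw [e1, e2]; exact hT
    · subst hn
      have hA0 : A0 = A := by
        rw [List.getElem?_append_right (le_refl _)] at hg
        simp at hg
        exact hg.symm
      subst hA0
      have e1 : subst N Δ.length (Term.var Δ.length) = lift Δ.length 0 N := by
        simp [subst]
      have e2 : subst N Δ.length (lift (Δ.length + 1) 0 A0) = lift Δ.length 0 A0 := by
        rw [subst_lift_cancel N A0 (Nat.zero_le _) (by omega), Nat.add_sub_cancel]
      rw [e1, e2]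
      have hT := hN.weakenN (substCtx N Δ) hval
      rw [substCtx_length] at hT
      exact hT
    · have hg0 : Γ₀[n - Δ.length - 1]? = some A0 := by
        rw [List.getElem?_append_right (by omega)] at hg
        have e : n - Δ.length = (n - Δ.length - 1) + 1 := by omega
        rw [e] at hg
        exact hg
      have hg' : (substCtx N Δ ++ Γ₀)[n - 1]? = some A0 := by
        rw [List.getElem?_append_right (by rw [substCtx_length]; omega), substCtx_length]
        have e : n - 1 - Δ.length = n - Δ.length - 1 := by omega
        rw [e]
        exact hg0
      have hT := Typing.var hval hg'
      have e1 : subst N Δ.length (Term.var n) = Term.var (n - 1) := by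
        have h1 : ¬ n < Δ.length := by omega
        have h2 : n ≠ Δ.length := by omega
        simp [subst, h1, h2]
      have e2 : subst N Δ.length (lift (n+1) 0 A0) = lift (n - 1 + 1) 0 A0 := by
        rw [subst_lift_cancel N A0 (Nat.zero_le _) (by omega)]
        have e : n + 1 - 1 = n - 1 + 1 := by omega
        rw [e]
      rw [e1, e2]; exact hT
  · intro Γ A0 j B h1 h2 ih1 ih2 Δ A Γ₀ N he hN
    subst he
    exact Typing.pi1 (ih1 Δ A Γ₀ N rfl hN) (ih2 (A0 :: Δ) A Γ₀ N rfl hN)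
  · intro Γ A0 j B h1 h2 ih1 ih2 Δ A Γ₀ N he hN
    subst he
    exact Typing.pi2 (ih1 Δ A Γ₀ N rfl hN) (ih2 (A0 :: Δ) A Γ₀ N rfl hN)
  · intro Γ A0 j B h1 h2 ih1 ih2 Δ A Γ₀ N he hN
    subst he
    exact Typing.sig (ih1 Δ A Γ₀ N rfl hN) (ih2 (A0 :: Δ) A Γ₀ N rfl hN)
  · intro A0 Γ M B h1 ih1 Δ A Γ₀ N he hN
    subst he
    exact Typing.lam (ih1 (A0 :: Δ) A Γ₀ N rfl hN)
  · intro Γ M A0 B P h1 h2 ih1 ih2 Δ A Γ₀ N he hN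
    subst he
    have e : subst N Δ.length (subst0 B P) =
        subst0 (subst N (Δ.length + 1) B) (subst N Δ.length P) := by
      unfold subst0
      rw [subst_subst N P B (Nat.zero_le _), Nat.sub_zero]
    rw [e]
    exact Typing.app (ih1 Δ A Γ₀ N rfl hN) (ih2 Δ A Γ₀ N rfl hN)
  · intro Γ M A0 P B j h1 h2 h3 ih1 ih2 ih3 Δ A Γ₀ N he hN
    subst he
    have e : subst N Δ.length (subst0 B M) =
        subst0 (subst N (Δ.length + 1) B) (subst N Δ.length M) := by
      unfold subst0
      rw [subst_subst N M B (Nat.zero_le _), Nat.sub_zero]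
    have H2 := ih2 Δ A Γ₀ N rfl hN
    rw [e] at H2
    exact Typing.pair (ih1 Δ A Γ₀ N rfl hN) H2 (ih3 (A0 :: Δ) A Γ₀ N rfl hN)
  · intro Γ M A0 B h1 ih1 Δ A Γ₀ N he hN
    subst he
    exact Typing.proj1 (ih1 Δ A Γ₀ N rfl hN)
  · intro Γ M A0 B h1 ih1 Δ A Γ₀ N he hN
    subst he
    have e : subst N Δ.length (subst0 B (.proj1 M)) =
        subst0 (subst N (Δ.length + 1) B) (.proj1 (subst N Δ.length M)) := by
      unfold subst0
      rw [subst_subst N (Term.proj1 M) B (Nat.zero_le _), Nat.sub_zero]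
      rfl
    rw [e]
    exact Typing.proj2 (ih1 Δ A Γ₀ N rfl hN)
  · intro Γ M A0 B j h1 h2 hc ih1 ih2 Δ A Γ₀ N he hN
    subst he
    exact Typing.cum (ih1 Δ A Γ₀ N rfl hN) (ih2 Δ A Γ₀ N rfl hN) (hc.subst N Δ.length)

theorem Typing.subst0' {Γ : List Term} {M B A N : Term}
    (h : Typing (A :: Γ) M B) (hN : Typing Γ N A) :
    Typing Γ (subst0 M N) (subst0 B N) :=
  typing_subst h [] A Γ N rfl hN

end ECC
namespace ECC

/-- Context conversion. -/
theorem typing_convctx {Γt : List Term} {M B : Term} (h : Typing Γt M B) :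
    ∀ Δ A A' Γ₀ jA jA', Γt = Δ ++ A :: Γ₀ → Conv A A' →
      Typing Γ₀ A (.type jA) → Typing Γ₀ A' (.type jA') →
      Typing (Δ ++ A' :: Γ₀) M B := by
  refine @Typing.rec
    (fun Γt _ => ∀ Δ A A' Γ₀ jA jA', Γt = Δ ++ A :: Γ₀ → Conv A A' →
      Typing Γ₀ A (.type jA) → Typing Γ₀ A' (.type jA') → Valid (Δ ++ A' :: Γ₀))
    (fun Γt M B _ => ∀ Δ A A' Γ₀ jA jA', Γt = Δ ++ A :: Γ₀ → Conv A A' →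
      Typing Γ₀ A (.type jA) → Typing Γ₀ A' (.type jA') →
      Typing (Δ ++ A' :: Γ₀) M B)
    ?_ ?_ ?_ ?_ ?_ ?_ ?_ ?_ ?_ ?_ ?_ ?_ ?_ ?_ Γt M B h
  · intro Δ A A' Γ₀ jA jA' he
    exact absurd he (by simp)
  · intro Γ A0 j ht ih Δ A A' Γ₀ jA jA' he hc hA hA'
    cases Δ with
    | nil =>
      simp only [List.nil_append, List.cons.injEq] at he
      obtain ⟨rfl, rfl⟩ := he
      exact Valid.cons hA'
    | cons D Δ' =>
      simp only [List.cons_append, List.cons.injEq] at he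
      obtain ⟨rfl, he⟩ := he
      exact Valid.cons (ih Δ' A A' Γ₀ jA jA' he hc hA hA')
  · intro Γ hv ihv Δ A A' Γ₀ jA jA' he hc hA hA'
    exact Typing.prop (ihv Δ A A' Γ₀ jA jA' he hc hA hA')
  · intro Γ j hv ihv Δ A A' Γ₀ jA jA' he hc hA hA'
    exact Typing.type (ihv Δ A A' Γ₀ jA jA' he hc hA hA')
  · intro Γ n A0 hv hg ihv Δ A A' Γ₀ jA jA' he hc hA hA'
    subst he
    have hval := ihv Δ A A' Γ₀ jA jA' rfl hc hA hA'
    rcases Nat.lt_trichotomy n Δ.length with hn | hn | hn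
    · have hg' : (Δ ++ A' :: Γ₀)[n]? = some A0 := by
        rw [List.getElem?_append_left hn] at hg ⊢
        exact hg
      exact Typing.var hval hg'
    · subst hn
      have hA0 : A0 = A := by
        rw [List.getElem?_append_right (le_refl _)] at hg
        simp at hg
        exact hg.symm
      subst hA0
      have hg' : (Δ ++ A' :: Γ₀)[Δ.length]? = some A' := by
        rw [List.getElem?_append_right (le_refl _)]
        simp
      have hT := Typing.var hval hg'
      have hlen : (Δ ++ [A']).length = Δ.length + 1 := by simp
      have hdec : Δ ++ A' :: Γ₀ = (Δ ++ [A']) ++ Γ₀ := by simp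
      have hW := hA.weakenN (Δ ++ [A']) (by rw [← hdec]; exact hval)
      rw [hlen, ← hdec] at hW
      exact Typing.cum hT hW (Cum.conv ((hc.symm').lift (Δ.length + 1) 0))
    · have hg' : (Δ ++ A' :: Γ₀)[n]? = some A0 := by
        rw [List.getElem?_append_right (by omega)] at hg ⊢
        have e : n - Δ.length = (n - Δ.length - 1) + 1 := by omega
        rw [e] at hg ⊢
        exact hg
      exact Typing.var hval hg'
  · intro Γ A0 j B h1 h2 ih1 ih2 Δ A A' Γ₀ jA jA' he hc hA hA'
    subst he
    exact Typing.pi1 (ih1 Δ A A' Γ₀ jA jA' rfl hc hA hA')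
      (ih2 (A0 :: Δ) A A' Γ₀ jA jA' rfl hc hA hA')
  · intro Γ A0 j B h1 h2 ih1 ih2 Δ A A' Γ₀ jA jA' he hc hA hA'
    subst he
    exact Typing.pi2 (ih1 Δ A A' Γ₀ jA jA' rfl hc hA hA')
      (ih2 (A0 :: Δ) A A' Γ₀ jA jA' rfl hc hA hA')
  · intro Γ A0 j B h1 h2 ih1 ih2 Δ A A' Γ₀ jA jA' he hc hA hA'
    subst he
    exact Typing.sig (ih1 Δ A A' Γ₀ jA jA' rfl hc hA hA')
      (ih2 (A0 :: Δ) A A' Γ₀ jA jA' rfl hc hA hA')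
  · intro A0 Γ M B h1 ih1 Δ A A' Γ₀ jA jA' he hc hA hA'
    subst he
    exact Typing.lam (ih1 (A0 :: Δ) A A' Γ₀ jA jA' rfl hc hA hA')
  · intro Γ M A0 B P h1 h2 ih1 ih2 Δ A A' Γ₀ jA jA' he hc hA hA'
    subst he
    exact Typing.app (ih1 Δ A A' Γ₀ jA jA' rfl hc hA hA')
      (ih2 Δ A A' Γ₀ jA jA' rfl hc hA hA')
  · intro Γ M A0 P B j h1 h2 h3 ih1 ih2 ih3 Δ A A' Γ₀ jA jA' he hc hA hA'
    subst he
    exact Typing.pair (ih1 Δ A A' Γ₀ jA jA' rfl hc hA hA')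
      (ih2 Δ A A' Γ₀ jA jA' rfl hc hA hA')
      (ih3 (A0 :: Δ) A A' Γ₀ jA jA' rfl hc hA hA')
  · intro Γ M A0 B h1 ih1 Δ A A' Γ₀ jA jA' he hc hA hA'
    subst he
    exact Typing.proj1 (ih1 Δ A A' Γ₀ jA jA' rfl hc hA hA')
  · intro Γ M A0 B h1 ih1 Δ A A' Γ₀ jA jA' he hc hA hA'
    subst he
    exact Typing.proj2 (ih1 Δ A A' Γ₀ jA jA' rfl hc hA hA')
  · intro Γ M A0 B j h1 h2 hcum ih1 ih2 Δ A A' Γ₀ jA jA' he hc hA hA'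
    subst he
    exact Typing.cum (ih1 Δ A A' Γ₀ jA jA' rfl hc hA hA')
      (ih2 Δ A A' Γ₀ jA jA' rfl hc hA hA') hcum

theorem Typing.convctx0 {Γ : List Term} {M B A A' : Term} {jA jA' : ℕ}
    (h : Typing (A :: Γ) M B) (hc : Conv A A')
    (hA : Typing Γ A (.type jA)) (hA' : Typing Γ A' (.type jA')) :
    Typing (A' :: Γ) M B :=
  typing_convctx h [] A A' Γ jA jA' rfl hc hA hA'

/-- lifting a typing to a higher universe -/
theorem Typing.lift_univ {Γ : List Term} {X : Term} {j k : ℕ}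
    (h : Typing Γ X (.type j)) (hjk : j ≤ k) : Typing Γ X (.type k) :=
  Typing.cum h (Typing.type h.valid) (Cum.typeType hjk)

theorem Typing.prop_to_type {Γ : List Term} {X : Term}
    (h : Typing Γ X .prop) : Typing Γ X (.type 0) :=
  Typing.cum h (Typing.type h.valid) Cum.propType

/-- Type correctness. -/
theorem Typing.tc {Γ : List Term} {M A : Term} (h : Typing Γ M A) :
    ∃ j, Typing Γ A (.type j) := by
  refine @Typing.rec (fun _ _ => True) (fun Γ M A _ => ∃ j, Typing Γ A (.type j))
    ?_ ?_ ?_ ?_ ?_ ?_ ?_ ?_ ?_ ?_ ?_ ?_ ?_ ?_ Γ M A h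
  · trivial
  · intros; trivial
  · intro Γ hv _; exact ⟨1, Typing.type hv⟩
  · intro Γ j hv _; exact ⟨j+2, Typing.type hv⟩
  · intro Γ n A hv hg _; exact valid_get hv hg
  · intro Γ A j B h1 h2 _ _; exact ⟨0, Typing.prop h1.valid⟩
  · intro Γ A j B h1 h2 _ _; exact ⟨j+1, Typing.type h1.valid⟩
  · intro Γ A j B h1 h2 _ _; exact ⟨j+1, Typing.type h1.valid⟩
  · intro A Γ M B h1 ih1
    obtain ⟨j, hB⟩ := ih1
    obtain ⟨jA, hA⟩ := h1.valid.head
    exact ⟨max jA j, Typing.pi2 (hA.lift_univ (le_max_left _ _))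
      (hB.lift_univ (le_max_right _ _))⟩
  · intro Γ M A B N h1 h2 ih1 _
    obtain ⟨j, hpi⟩ := ih1
    have hg := hpi.gen
    obtain ⟨j', hA, hB | hB⟩ := hg
    · exact ⟨0, (hB.1.subst0' h2).prop_to_type⟩
    · exact ⟨j', hB.1.subst0' h2⟩
  · intro Γ M A N B j h1 h2 h3 _ _ _
    obtain ⟨jA, hA⟩ := h3.valid.head
    exact ⟨max jA j, Typing.sig (hA.lift_univ (le_max_left _ _))
      (h3.lift_univ (le_max_right _ _))⟩
  · intro Γ M A B h1 ih1
    obtain ⟨j, hsig⟩ := ih1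
    obtain ⟨j', hA, hB, _⟩ := hsig.gen
    exact ⟨j', hA⟩
  · intro Γ M A B h1 ih1
    obtain ⟨j, hsig⟩ := ih1
    obtain ⟨j', hA, hB, _⟩ := hsig.gen
    exact ⟨j', hB.subst0' (Typing.proj1 h1)⟩
  · intro Γ M A B j h1 h2 hc _ _
    exact ⟨j, h2⟩

end ECC
namespace ECC

open Relation

/-- Subject reduction. -/
theorem Typing.sr (M : Term) : ∀ {Γ : List Term} {σ M' : Term},
    Typing Γ M σ → Red M M' → Typing Γ M' σ := by
  induction M with
  | var n => intro Γ σ M' h hr; cases hr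
  | prop => intro Γ σ M' h hr; cases hr
  | type j => intro Γ σ M' h hr; cases hr
  | pi A B ihA ihB =>
    intro Γ σ M' h hr
    obtain ⟨jσ, hσ⟩ := h.tc
    obtain ⟨j, hA, hB⟩ := h.gen
    cases hr with
    | piL hr' =>
      have hA' := ihA hA hr'
      rcases hB with ⟨hB, hc⟩ | ⟨hB, hc⟩
      · exact Typing.cum (Typing.pi1 hA' (hB.convctx0 (Red.conv hr') hA hA')) hσ hc
      · exact Typing.cum (Typing.pi2 hA' (hB.convctx0 (Red.conv hr') hA hA')) hσ hc
    | piR hr' =>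
      rcases hB with ⟨hB, hc⟩ | ⟨hB, hc⟩
      · exact Typing.cum (Typing.pi1 hA (ihB hB hr')) hσ hc
      · exact Typing.cum (Typing.pi2 hA (ihB hB hr')) hσ hc
  | sigma A B ihA ihB =>
    intro Γ σ M' h hr
    obtain ⟨jσ, hσ⟩ := h.tc
    obtain ⟨j, hA, hB, hc⟩ := h.gen
    cases hr with
    | sigmaL hr' =>
      have hA' := ihA hA hr'
      exact Typing.cum (Typing.sig hA' (hB.convctx0 (Red.conv hr') hA hA')) hσ hc
    | sigmaR hr' =>
      exact Typing.cum (Typing.sig hA (ihB hB hr')) hσ hc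
  | lam A M0 ihA ihM =>
    intro Γ σ M' h hr
    obtain ⟨jσ, hσ⟩ := h.tc
    obtain ⟨B0, hM0, hc⟩ := h.gen
    obtain ⟨jA, hA⟩ := hM0.valid.head
    cases hr with
    | lamL hr' =>
      have hA' := ihA hA hr'
      have hM0' := hM0.convctx0 (Red.conv hr') hA hA'
      exact Typing.cum (Typing.lam hM0')
        hσ ((Cum.pi ((Red.conv hr').symm' : Conv _ A) (Cum.refl B0)).trans hc)
    | lamR hr' =>
      exact Typing.cum (Typing.lam (ihM hM0 hr')) hσ hc
  | app P Q ihP ihQ =>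
    intro Γ σ M' h hr
    obtain ⟨jσ, hσ⟩ := h.tc
    obtain ⟨A1, B1, hP, hQ, hc⟩ := h.gen
    cases hr with
    | @beta A M0 N =>
      obtain ⟨B0, hM0, hc2⟩ := hP.gen
      obtain ⟨hconv, hcumB⟩ := cum_pi_pi hc2
      obtain ⟨jA, hA⟩ := hM0.valid.head
      have hQ' : Typing Γ Q A := Typing.cum hQ hA (Cum.conv hconv.symm')
      have hsub := hM0.subst0' hQ'
      exact Typing.cum hsub hσ (((hcumB.subst Q 0)).trans hc)
    | appL hr' =>
      exact Typing.cum (Typing.app (ihP hP hr') hQ) hσ hc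
    | appR hr' =>
      have hQ' := ihQ hQ hr'
      have hcv : Conv (subst0 B1 _) (subst0 B1 Q) :=
        ((Red.conv hr').symm' : Conv _ Q).subst_arg B1 0
      exact Typing.cum (Typing.app hP hQ') hσ ((Cum.conv hcv).trans hc)
  | pair P Q T ihP ihQ ihT =>
    intro Γ σ M' h hr
    obtain ⟨jσ, hσ⟩ := h.tc
    obtain ⟨A1, B1, j, rfl, hP, hQ, hB1, hc⟩ := h.gen
    obtain ⟨jA, hA1⟩ := hB1.valid.head
    cases hr with
    | pairL hr' =>
      have hP' := ihP hP hr'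
      have hcv : Conv (subst0 B1 P) (subst0 B1 _) :=
        (Red.conv hr' : Conv P _).subst_arg B1 0
      have hQ' := Typing.cum hQ (hB1.subst0' hP') (Cum.conv hcv)
      exact Typing.cum (Typing.pair hP' hQ' hB1) hσ hc
    | pairR hr' =>
      exact Typing.cum (Typing.pair hP (ihQ hQ hr') hB1) hσ hc
    | pairB hr' =>
      have hT : Typing Γ (.sigma A1 B1) (.type (max jA j)) :=
        Typing.sig (hA1.lift_univ (le_max_left _ _)) (hB1.lift_univ (le_max_right _ _))
      have hT' := ihT hT hr'
      cases hr' with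
      | @sigmaL _ A1' _ hrA =>
        obtain ⟨j2, hA1', hB1', _⟩ := hT'.gen
        have hP' := Typing.cum hP hA1' (Cum.conv (Red.conv hrA))
        have hnew := Typing.pair hP' hQ hB1'
        exact Typing.cum hnew hσ
          ((Cum.sigma (Cum.conv ((Red.conv hrA).symm')) (Cum.refl B1)).trans hc)
      | @sigmaR _ B1' _ hrB =>
        obtain ⟨j2, hA1', hB1', _⟩ := hT'.gen
        have hcv : Conv (subst0 B1 P) (subst0 B1' P) :=
          (Red.conv hrB : Conv B1 B1').subst P 0
        have hQ' := Typing.cum hQ (hB1'.subst0' hP) (Cum.conv hcv)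
        have hnew := Typing.pair hP hQ' hB1'
        exact Typing.cum hnew hσ
          ((Cum.sigma (Cum.refl A1) (Cum.conv ((Red.conv hrB).symm'))).trans hc)
  | proj1 P ihP =>
    intro Γ σ M' h hr
    obtain ⟨jσ, hσ⟩ := h.tc
    obtain ⟨A1, B1, hP, hc⟩ := h.gen
    cases hr with
    | pr1 =>
      obtain ⟨A0, B0, j0, rfl, hP0, hQ0, hB0, hc2⟩ := hP.gen
      obtain ⟨hcA, hcB⟩ := cum_sigma_sigma hc2
      exact Typing.cum hP0 hσ (hcA.trans hc)
    | proj1C hr' =>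
      exact Typing.cum (Typing.proj1 (ihP hP hr')) hσ hc
  | proj2 P ihP =>
    intro Γ σ M' h hr
    obtain ⟨jσ, hσ⟩ := h.tc
    obtain ⟨A1, B1, hP, hc⟩ := h.gen
    cases hr with
    | pr2 =>
      rename_i M0 B0'
      obtain ⟨A0, B0, j0, rfl, hP0, hQ0, hB0, hc2⟩ := hP.gen
      obtain ⟨hcA, hcB⟩ := cum_sigma_sigma hc2
      have hcv : Conv (subst0 B1 M0)
          (subst0 B1 (.proj1 (Term.pair M0 M' (.sigma A0 B0)))) :=
        ((Red.conv (Red.pr1)).symm').subst_arg B1 0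
      exact Typing.cum hQ0 hσ (((hcB.subst M0 0).trans (Cum.conv hcv)).trans hc)
    | proj2C hr' =>
      have hP' := ihP hP hr'
      have hcv : Conv (subst0 B1 (.proj1 _)) (subst0 B1 (.proj1 P)) :=
        (Conv.congr (fun _ _ hh => Red.proj1C hh)
          ((Red.conv hr').symm')).subst_arg B1 0
      exact Typing.cum (Typing.proj2 hP') hσ ((Cum.conv hcv).trans hc)

theorem Typing.srs {Γ : List Term} {M σ M' : Term}
    (h : Typing Γ M σ) (hr : Rs M M') : Typing Γ M' σ := by
  induction hr with
  | refl => exact h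
  | tail _ h2 ih => exact Typing.sr _ ih h2
end ECC

namespace ECC

open Relation

theorem principal (α : Term) : ∀ (Γ : List Term) (τ : Term), Typing Γ α τ →
    ∃ τ₀, Typing Γ α τ₀ ∧ ∀ σ, Typing Γ α σ → Cum τ₀ σ := by
  classical
  induction α with
  | var n =>
    intro Γ τ h
    obtain ⟨A, hg, -⟩ := h.gen
    refine ⟨lift (n+1) 0 A, Typing.var h.valid hg, ?_⟩
    intro σ hσ
    obtain ⟨A2, hg2, hc⟩ := hσ.gen
    rw [hg] at hg2
    cases hg2
    exact hc
  | prop =>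
    intro Γ τ h
    exact ⟨.type 0, Typing.prop h.valid, fun σ hσ => hσ.gen⟩
  | type j =>
    intro Γ τ h
    exact ⟨.type (j+1), Typing.type h.valid, fun σ hσ => hσ.gen⟩
  | pi A B ihA ihB =>
    intro Γ τ h
    have hex : ∀ σ, Typing Γ (.pi A B) σ →
        ∃ u, Typing Γ (.pi A B) u ∧ Cum u σ ∧ (u = Term.prop ∨ ∃ j, u = Term.type j) := by
      intro σ hσ
      obtain ⟨j, hA, hB | hB⟩ := hσ.gen
      · exact ⟨.prop, Typing.pi1 hA hB.1, hB.2, Or.inl rfl⟩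
      · exact ⟨.type j, Typing.pi2 hA hB.1, hB.2, Or.inr ⟨j, rfl⟩⟩
    by_cases h0 : Typing Γ (.pi A B) .prop
    · refine ⟨.prop, h0, ?_⟩
      intro σ hσ
      obtain ⟨u, hu, hcu, rfl | ⟨j, rfl⟩⟩ := hex σ hσ
      · exact hcu
      · exact (Cum.propType.trans (Cum.typeType (Nat.zero_le j))).trans hcu
    · have hexT : ∃ j, Typing Γ (.pi A B) (.type j) := by
        obtain ⟨u, hu, -, rfl | ⟨j, rfl⟩⟩ := hex τ h
        · exact absurd hu h0
        · exact ⟨j, hu⟩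
      refine ⟨.type (Nat.find hexT), Nat.find_spec hexT, ?_⟩
      intro σ hσ
      obtain ⟨u, hu, hcu, rfl | ⟨j, rfl⟩⟩ := hex σ hσ
      · exact absurd hu h0
      · exact (Cum.typeType (Nat.find_min' hexT hu)).trans hcu
  | sigma A B ihA ihB =>
    intro Γ τ h
    have hex : ∀ σ, Typing Γ (.sigma A B) σ →
        ∃ j, Typing Γ (.sigma A B) (.type j) ∧ Cum (.type j) σ := by
      intro σ hσ
      obtain ⟨j, hA, hB, hc⟩ := hσ.gen
      exact ⟨j, Typing.sig hA hB, hc⟩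
    have hexT : ∃ j, Typing Γ (.sigma A B) (.type j) := by
      obtain ⟨j, hj, -⟩ := hex τ h
      exact ⟨j, hj⟩
    refine ⟨.type (Nat.find hexT), Nat.find_spec hexT, ?_⟩
    intro σ hσ
    obtain ⟨j, hj, hcu⟩ := hex σ hσ
    exact (Cum.typeType (Nat.find_min' hexT hj)).trans hcu
  | lam A M0 ihA ihM =>
    intro Γ τ h
    obtain ⟨B, hM0, -⟩ := h.gen
    obtain ⟨τM, hTM, hmin⟩ := ihM (A :: Γ) B hM0
    refine ⟨.pi A τM, Typing.lam hTM, ?_⟩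
    intro σ hσ
    obtain ⟨B', hM0', hc'⟩ := hσ.gen
    exact (Cum.pi (Conv.refl A) (hmin B' hM0')).trans hc'
  | app M N ihM ihN =>
    intro Γ τ h
    obtain ⟨A1, B1, hM1, hN1, -⟩ := h.gen
    obtain ⟨τM, hTM, hmin⟩ := ihM Γ (.pi A1 B1) hM1
    have hcum1 : Cum τM (.pi A1 B1) := hmin _ hM1
    obtain ⟨a, b, hXc, hconva, hcumb⟩ := cum_pi_inv hcum1 (Conv.refl _)
    obtain ⟨c, hr1, hr2⟩ := conv_join hXc
    obtain ⟨a', b', rfl, hra, hrb⟩ := rs_pi hr2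
    obtain ⟨jM, hτMty⟩ := hTM.tc
    have hpity : Typing Γ (.pi a' b') (.type jM) := hτMty.srs hr1
    have hMpi : Typing Γ M (.pi a' b') :=
      Typing.cum hTM hpity (Cum.conv hr1.conv)
    obtain ⟨j', hA', -⟩ := hpity.gen
    have hNa' : Typing Γ N a' :=
      Typing.cum hN1 hA' (Cum.conv ((hconva.symm').trans' hra.conv))
    refine ⟨subst0 b' N, Typing.app hMpi hNa', ?_⟩
    intro σ hσ
    obtain ⟨A2, B2, hM2, hN2, hc2⟩ := hσ.gen
    obtain ⟨a2, b2, hXc2, -, hcumb2⟩ := cum_pi_inv (hmin _ hM2) (Conv.refl _)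
    obtain ⟨-, hconvb⟩ := conv_pi_pi ((hXc.symm').trans' hXc2)
    have : Cum b' B2 :=
      (Cum.conv ((hrb.conv.symm').trans' hconvb)).trans hcumb2
    exact ((this.subst N 0).trans hc2)
  | pair P Q T ihP ihQ ihT =>
    intro Γ τ h
    obtain ⟨A, B, j, rfl, hP, hQ, hB, -⟩ := h.gen
    refine ⟨.sigma A B, Typing.pair hP hQ hB, ?_⟩
    intro σ hσ
    obtain ⟨A2, B2, j2, he2, -, -, -, hc2⟩ := hσ.gen
    obtain ⟨rfl, rfl⟩ : A2 = A ∧ B2 = B := by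
      have := he2.symm
      simp only [Term.sigma.injEq] at this
      exact this
    exact hc2
  | proj1 P ihP =>
    intro Γ τ h
    obtain ⟨A1, B1, hP1, -⟩ := h.gen
    obtain ⟨τM, hTM, hmin⟩ := ihP Γ (.sigma A1 B1) hP1
    obtain ⟨a, b, hXc, hcuma, hcumb⟩ := cum_sigma_inv (hmin _ hP1) (Conv.refl _)
    obtain ⟨c, hr1, hr2⟩ := conv_join hXc
    obtain ⟨a', b', rfl, hra, hrb⟩ := rs_sigma hr2
    obtain ⟨jM, hτMty⟩ := hTM.tc
    have hsity : Typing Γ (.sigma a' b') (.type jM) := hτMty.srs hr1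
    have hMsi : Typing Γ P (.sigma a' b') :=
      Typing.cum hTM hsity (Cum.conv hr1.conv)
    refine ⟨a', Typing.proj1 hMsi, ?_⟩
    intro σ hσ
    obtain ⟨A2, B2, hP2, hc2⟩ := hσ.gen
    obtain ⟨a2, b2, hXc2, hcuma2, -⟩ := cum_sigma_inv (hmin _ hP2) (Conv.refl _)
    obtain ⟨hconva, -⟩ := conv_sigma_sigma ((hXc.symm').trans' hXc2)
    exact ((Cum.conv ((hra.conv.symm').trans' hconva)).trans hcuma2).trans hc2
  | proj2 P ihP =>
    intro Γ τ h
    obtain ⟨A1, B1, hP1, -⟩ := h.gen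
    obtain ⟨τM, hTM, hmin⟩ := ihP Γ (.sigma A1 B1) hP1
    obtain ⟨a, b, hXc, hcuma, hcumb⟩ := cum_sigma_inv (hmin _ hP1) (Conv.refl _)
    obtain ⟨c, hr1, hr2⟩ := conv_join hXc
    obtain ⟨a', b', rfl, hra, hrb⟩ := rs_sigma hr2
    obtain ⟨jM, hτMty⟩ := hTM.tc
    have hsity : Typing Γ (.sigma a' b') (.type jM) := hτMty.srs hr1
    have hMsi : Typing Γ P (.sigma a' b') :=
      Typing.cum hTM hsity (Cum.conv hr1.conv)
    refine ⟨subst0 b' (.proj1 P), Typing.proj2 hMsi, ?_⟩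
    intro σ hσ
    obtain ⟨A2, B2, hP2, hc2⟩ := hσ.gen
    obtain ⟨a2, b2, hXc2, -, hcumb2⟩ := cum_sigma_inv (hmin _ hP2) (Conv.refl _)
    obtain ⟨-, hconvb⟩ := conv_sigma_sigma ((hXc.symm').trans' hXc2)
    have : Cum b' B2 :=
      (Cum.conv ((hrb.conv.symm').trans' hconvb)).trans hcumb2
    exact ((this.subst (.proj1 P) 0).trans hc2)

end ECC

/-- every Γ-object in ECC has a principal type: if `Γ ⊢ α : τ` is
derivable, then there exists `τ₀` with `Γ ⊢ α : τ₀` such that `τ₀ ⪯ σ` for every `σ`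
with `Γ ⊢ α : σ`. -/
theorem principal_type_exists {Γ : List ECC.Term} {α τ : ECC.Term}
    (h : ECC.Typing Γ α τ) :
    ∃ τ₀, ECC.Typing Γ α τ₀ ∧ ∀ σ, ECC.Typing Γ α σ → ECC.Cum τ₀ σ :=
  ECC.principal α Γ τ h
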